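/- arXiv:1504.07944 — 6 statements merged into one kernel-verified Lean document; each statement's English description precedes it below -/
import Mathlib

section
/- Let m ∈ {3, 4, 6} and let p be a prime greater than 3. Then for any t ∈ D_p, one has the congruence ∑_{k=0}^{⌊p/m⌋} ((1/m)_k · ((m−1)/m)_k / (2k+1)!) · t^k ≡ (1/(1 + 2⌊p/m⌋)) · w_{⌊p/m⌋}(1 − t/2) (mod p). -/
/-- The sequence `w n x` defined by `w 0 x = 1`, `w 1 x = 1 + 2x`,
`w (n+1) x = 2x * w n x - w (n-1) x`. -/
def w {R : Type*} [CommRing R] : ℕ → R → R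
  | 0, _ => 1
  | 1, x => 1 + 2 * x
  | n + 2, x => 2 * x * w (n + 1) x - w n x

open Finset Nat

namespace Stmt0Aux



def dd (n k : ℕ) : ℕ := Nat.choose (n + k) (2 * k) + 2 * Nat.choose (n + k) (2 * k + 1)

lemma dd_zero (n : ℕ) : dd n 0 = 2 * n + 1 := by
  simp [dd]; omega

lemma dd_vanish {n k : ℕ} (h : n < k) : dd n k = 0 := by
  unfold dd
  rw [Nat.choose_eq_zero_of_lt (by omega), Nat.choose_eq_zero_of_lt (by omega)]

lemma pascal4 (a c : ℕ) :
    (Nat.choose (a+1+1) (c+1+1) + 2 * Nat.choose (a+1+1) (c+1+1+1))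
      + (Nat.choose a (c+1+1) + 2 * Nat.choose a (c+1+1+1))
    = 2 * (Nat.choose (a+1) (c+1+1) + 2 * Nat.choose (a+1) (c+1+1+1))
      + (Nat.choose a c + 2 * Nat.choose a (c+1)) := by
  simp only [Nat.choose_succ_succ]
  ring

lemma dd_pascal (n j : ℕ) :
    dd (n + 2) (j + 1) + dd n (j + 1) = 2 * dd (n + 1) (j + 1) + dd (n + 1) j := by
  unfold dd
  have h := pascal4 (n + j + 1) (2 * j)
  simp only [show n + 2 + (j + 1) = n + j + 1 + 1 + 1 by omega,
    show n + (j + 1) = n + j + 1 by omega,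
    show n + 1 + (j + 1) = n + j + 1 + 1 by omega,
    show n + 1 + j = n + j + 1 by omega,
    show 2 * (j + 1) = 2 * j + 1 + 1 by omega,
    show 2 * (j + 1) + 1 = 2 * j + 1 + 1 + 1 by omega] at h ⊢
  omega

/-- coefficient as a rational -/
noncomputable def E (n k : ℕ) : ℚ := (-1 : ℚ) ^ k * (dd n k : ℚ)

lemma E_key (n k : ℕ) :
    E (n+2) (k+1) = 2 * E (n+1) (k+1) - E (n+1) k - E n (k+1) := by
  have h : ((dd (n + 2) (k + 1) : ℚ)) + dd n (k + 1) = 2 * dd (n + 1) (k + 1) + dd (n + 1) k := by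
    exact_mod_cast congrArg (Nat.cast : ℕ → ℚ) (dd_pascal n k)
  unfold E
  linear_combination ((-1 : ℚ) ^ (k + 1)) * h

lemma w_expansion (n : ℕ) (t : ℚ) :
    w n (1 - t / 2) = ∑ k ∈ range (n + 1), E n k * t ^ k := by
  induction n using Nat.twoStepInduction with
  | zero => simp [w, E, dd]
  | one =>
    rw [show w 1 (1 - t/2) = 1 + 2 * (1 - t/2) from rfl]
    rw [Finset.sum_range_succ, Finset.sum_range_succ, Finset.sum_range_zero]
    simp only [E, dd]
    norm_num [Nat.choose]
    ring
  | more n ih1 ih2 =>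
    rw [show w (n+2) (1 - t/2) = 2 * (1 - t/2) * w (n+1) (1-t/2) - w n (1-t/2) from rfl,
      ih2, ih1]
    have hv1 : E (n+1) (n+2) = 0 := by simp [E, dd_vanish (by omega : n+1 < n+2)]
    have hv0 : E n (n+1) = 0 := by simp [E, dd_vanish (by omega : n < n+1)]
    have hv0' : E n (n+2) = 0 := by simp [E, dd_vanish (by omega : n < n+2)]
    have h1 : ∑ k ∈ range (n+2), E (n+1) k * t ^ k
        = (∑ k ∈ range (n+2), E (n+1) (k+1) * t ^ (k+1)) + E (n+1) 0 := by
      have a := Finset.sum_range_succ' (fun k => E (n+1) k * t ^ k) (n+2)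
      rw [Finset.sum_range_succ] at a
      simp only [hv1, zero_mul, add_zero, pow_zero, mul_one] at a
      exact a
    have h0 : ∑ k ∈ range (n+1), E n k * t ^ k
        = (∑ k ∈ range (n+2), E n (k+1) * t ^ (k+1)) + E n 0 := by
      have a := Finset.sum_range_succ' (fun k => E n k * t ^ k) (n+2)
      rw [Finset.sum_range_succ, Finset.sum_range_succ] at a
      simp only [hv0, hv0', zero_mul, add_zero, pow_zero, mul_one] at a
      exact a
    have h2 : ∑ k ∈ range (n+3), E (n+2) k * t ^ k
        = (∑ k ∈ range (n+2), E (n+2) (k+1) * t ^ (k+1)) + E (n+2) 0 := by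
      have a := Finset.sum_range_succ' (fun k => E (n+2) k * t ^ k) (n+2)
      simp only [pow_zero, mul_one] at a
      exact a
    have hts : t * ∑ k ∈ range (n+2), E (n+1) k * t ^ k
        = ∑ k ∈ range (n+2), E (n+1) k * t ^ (k+1) := by
      rw [Finset.mul_sum]; exact Finset.sum_congr rfl (fun k _ => by ring)
    have hsum : ∑ k ∈ range (n+2), E (n+2) (k+1) * t ^ (k+1)
        = ∑ k ∈ range (n+2),
            (2 * (E (n+1) (k+1) * t ^ (k+1)) - E (n+1) k * t ^ (k+1) - E n (k+1) * t ^ (k+1)) :=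
      Finset.sum_congr rfl (fun k _ => by rw [E_key]; ring)
    have hc : E (n+2) 0 = 2 * E (n+1) 0 - E n 0 := by
      simp only [E, dd_zero, pow_zero, one_mul]
      push_cast; ring
    calc 2 * (1 - t/2) * (∑ k ∈ range (n+2), E (n+1) k * t ^ k)
          - ∑ k ∈ range (n+1), E n k * t ^ k
        = 2 * (∑ k ∈ range (n+2), E (n+1) k * t ^ k)
            - t * (∑ k ∈ range (n+2), E (n+1) k * t ^ k)
            - ∑ k ∈ range (n+1), E n k * t ^ k := by ring
      _ = ∑ k ∈ range (n+3), E (n+2) k * t ^ k := by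
          rw [hts, h1, h0, h2, hsum, Finset.sum_sub_distrib, Finset.sum_sub_distrib,
            ← Finset.mul_sum, hc]
          ring



/-- N1 -/
lemma dd_mul {n k : ℕ} (hk : k ≤ n) :
    (2 * k + 1) * dd n k = (2 * n + 1) * Nat.choose (n + k) (2 * k) := by
  have h := Nat.choose_succ_right_eq (n + k) (2 * k)
  have h2 : n + k - 2 * k = n - k := by omega
  rw [h2] at h
  unfold dd
  have h3 : n - k + (2 * k + 1) = n + k + 1 := by omega
  nlinarith [h]

/-- N5 -/
lemma dd_fact {n k : ℕ} (hk : k ≤ n) :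
    dd n k * (2 * k + 1) ! * (n - k) ! * (2 * n) ! = (n + k) ! * (2 * n + 1) ! := by
  have h1 := dd_mul hk
  have h2 : Nat.choose (n + k) (2 * k) * (2 * k) ! * (n - k) ! = (n + k) ! := by
    have := Nat.choose_mul_factorial_mul_factorial (n := n + k) (k := 2 * k) (by omega)
    rw [show n + k - 2 * k = n - k by omega] at this
    exact this
  have h3 : (2 * k + 1) ! = (2 * k + 1) * (2 * k) ! := Nat.factorial_succ _
  have h4 : (2 * n + 1) ! = (2 * n + 1) * (2 * n) ! := Nat.factorial_succ _
  calc dd n k * (2 * k + 1) ! * (n - k) ! * (2 * n) !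
      = ((2 * k + 1) * dd n k) * ((2*k) ! * (n-k) ! * (2*n) !) := by rw [h3]; ring
    _ = ((2 * n + 1) * Nat.choose (n+k) (2*k)) * ((2*k) ! * (n-k) ! * (2*n) !) := by rw [h1]
    _ = (Nat.choose (n+k) (2*k) * (2*k) ! * (n-k) !) * ((2*n+1) * (2*n) !) := by ring
    _ = (n + k) ! * (2 * n + 1) ! := by rw [h2, h4]

/-- N3 -/
lemma prod_core {n k : ℕ} (hk : k ≤ n) :
    (∏ j ∈ range k, (n - j) * (n + j + 1)) * (n - k) ! = (n + k) ! := by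
  induction k with
  | zero => simp
  | succ k ih =>
    have hk' : k ≤ n := by omega
    rw [prod_range_succ]
    have h5 : (n - k) ! = (n - k) * (n - (k+1)) ! := by
      rw [show n - k = (n - (k+1)) + 1 by omega, Nat.factorial_succ]
    calc (∏ j ∈ range k, (n - j) * (n + j + 1)) * ((n - k) * (n + k + 1)) * (n - (k+1)) !
        = ((∏ j ∈ range k, (n - j) * (n + j + 1)) * ((n - k) * (n - (k+1)) !)) * (n + k + 1) := by
          ring
      _ = ((∏ j ∈ range k, (n - j) * (n + j + 1)) * (n - k) !) * (n + k + 1) := by rw [h5]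
      _ = (n + k) ! * (n + k + 1) := by rw [ih hk']
      _ = (n + (k+1)) ! := by rw [show n + (k+1) = (n + k) + 1 by omega, Nat.factorial_succ]; ring


lemma cast_eq_div {p : ℕ} [Fact p.Prime] (q : ℚ) (A : ℤ) (Dn : ℕ)
    (hD : (Dn : ZMod p) ≠ 0) (h : q * (Dn : ℚ) = (A : ℚ)) :
    (q : ZMod p) = (A : ZMod p) / (Dn : ZMod p) := by
  have hden0 : (q.den : ℚ) ≠ 0 := by exact_mod_cast q.den_ne_zero
  have hint : q.num * (Dn : ℤ) = A * (q.den : ℤ) := by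
    have h2 : (q.num : ℚ) * (Dn : ℚ) = (A : ℚ) * (q.den : ℚ) := by
      rw [← Rat.num_div_den q] at h
      field_simp at h
      linarith [h]
    exact_mod_cast h2
  have hintZ : (q.num : ZMod p) * (Dn : ZMod p) = (A : ZMod p) * (q.den : ZMod p) := by
    exact_mod_cast congrArg (Int.cast : ℤ → ZMod p) hint
  have hqden : ((q.den : ℕ) : ZMod p) ≠ 0 := by
    intro h0
    rw [h0, mul_zero] at hintZ
    have hnum : ((q.num : ℤ) : ZMod p) = 0 := by
      rcases mul_eq_zero.mp hintZ with h' | h'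
      · exact h'
      · exact absurd h' hD
    have hd1 : p ∣ q.den := (ZMod.natCast_eq_zero_iff _ _).mp h0
    have hd2 : (p : ℤ) ∣ q.num := (ZMod.intCast_zmod_eq_zero_iff_dvd _ _).mp hnum
    have hd2' : p ∣ q.num.natAbs := Int.ofNat_dvd_right.mp (Int.dvd_natAbs.mpr hd2)
    have hco : Nat.Coprime p p := Nat.Coprime.coprime_dvd_right hd1
      (Nat.Coprime.coprime_dvd_left hd2' q.reduced)
    have : p = 1 := by simpa [Nat.Coprime, Nat.gcd_self] using hco
    exact (Nat.Prime.ne_one (Fact.out : p.Prime)) this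
  rw [Rat.cast_def]
  rw [div_eq_div_iff hqden hD]
  push_cast at hintZ ⊢
  linear_combination hintZ




lemma prod_Ico_fact {a b : ℕ} (h : a ≤ b) :
    (∏ j ∈ Ico (a + 1) (b + 1), j) * a ! = b ! := by
  have := Finset.prod_Ico_consecutive (f := fun j => j)
    (by omega : 1 ≤ a + 1) (by omega : a + 1 ≤ b + 1)
  rw [Finset.prod_Ico_id_eq_factorial, Finset.prod_Ico_id_eq_factorial] at this
  rw [mul_comm, this]

lemma poch_eval (k : ℕ) (x : ℚ) :
    (ascPochhammer ℚ k).eval x = ∏ j ∈ range k, (x + j) := by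
  induction k with
  | zero => simp
  | succ k ih => rw [ascPochhammer_succ_eval, prod_range_succ, ih]

def Aint (m n : ℕ) (t : ℚ) : ℤ :=
  ∑ k ∈ Finset.range (n+1),
    (∏ j ∈ Finset.range k, ((1 + (j:ℤ) * m) * ((m:ℤ) - 1 + j * m)))
      * (∏ j ∈ Finset.Ico (2*k+2) (2*n+2), (j:ℤ))
      * (m:ℤ)^(2*(n-k)) * t.num^k * (t.den:ℤ)^(n-k)

def Bint (m n : ℕ) (t : ℚ) : ℤ :=
  ((2*n)! : ℤ) * (m:ℤ)^(2*n)
    * ∑ k ∈ Finset.range (n+1), (-1)^k * (dd n k : ℤ) * t.num^k * (t.den:ℤ)^(n-k)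

lemma L_eq (m n : ℕ) (hm : (m:ℚ) ≠ 0) (t : ℚ) :
    (∑ k ∈ Finset.range (n + 1),
        (ascPochhammer ℚ k).eval (1 / (m : ℚ)) * (ascPochhammer ℚ k).eval (((m : ℚ) - 1) / m)
          / (Nat.factorial (2 * k + 1)) * t ^ k)
      * (((2*n+1)! * m^(2*n) * t.den^n : ℕ) : ℚ) = (Aint m n t : ℚ) := by
  rw [Finset.sum_mul, Aint]
  push_cast
  refine Finset.sum_congr rfl (fun k hk => ?_)
  have hkn : k ≤ n := by simpa using Nat.lt_succ_iff.mp (Finset.mem_range.mp hk)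
  obtain ⟨l, rfl⟩ : ∃ l, n = k + l := ⟨n - k, by omega⟩
  have hden : (t.den : ℚ) ≠ 0 := by exact_mod_cast t.den_ne_zero
  have hfac : ((2*k+1)! : ℚ) ≠ 0 := by exact_mod_cast (2*k+1).factorial_ne_zero
  have e1 : (∏ j ∈ range k, (1 + (j:ℚ)*m)) = (∏ j ∈ range k, ((1:ℚ)/m + j)) * (m:ℚ)^k := by
    rw [← Finset.prod_congr rfl (fun j _ => by field_simp; try ring :
        ∀ j ∈ range k, ((1:ℚ)/m + j) * (m:ℚ) = 1 + (j:ℚ)*m),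
      Finset.prod_mul_distrib, Finset.prod_const, Finset.card_range]
  have e2 : (∏ j ∈ range k, ((m:ℚ) - 1 + (j:ℚ)*m))
      = (∏ j ∈ range k, (((m:ℚ)-1)/m + j)) * (m:ℚ)^k := by
    rw [← Finset.prod_congr rfl (fun j _ => by field_simp; try ring :
        ∀ j ∈ range k, (((m:ℚ)-1)/m + j) * (m:ℚ) = (m:ℚ) - 1 + (j:ℚ)*m),
      Finset.prod_mul_distrib, Finset.prod_const, Finset.card_range]
  have e3 : (∏ j ∈ Ico (2*k+2) (2*(k+l)+2), (j:ℚ))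
      = ((2*(k+l)+1)! : ℚ) / ((2*k+1)! : ℚ) := by
    rw [eq_div_iff hfac]
    have := prod_Ico_fact (a := 2*k+1) (b := 2*(k+l)+1) (by omega)
    have hc := congrArg (Nat.cast : ℕ → ℚ) this
    push_cast at hc
    simpa [show 2*k+1+1 = 2*k+2 by omega, show 2*(k+l)+1+1 = 2*(k+l)+2 by omega] using hc
  have e4 : (t.num : ℚ)^k = t^k * (t.den : ℚ)^k := by
    have h4 : (t.num : ℚ) = t * t.den :=
      ((eq_div_iff hden).mp (Rat.num_div_den t).symm).symm
    rw [h4]; ring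
  rw [poch_eval, poch_eval, Finset.prod_mul_distrib, e1, e2, e3, e4]
  simp only [Nat.add_sub_cancel_left]
  field_simp
  ring_nf
  rw [Finset.prod_congr rfl (fun (x : ℕ) _ => (by ring : (m:ℚ) * (x:ℚ) * (m:ℚ)⁻¹ + (m:ℚ) * (m:ℚ)⁻¹ - (m:ℚ)⁻¹
    = (m:ℚ) * (m:ℚ)⁻¹ + (m:ℚ) * (m:ℚ)⁻¹ * (x:ℚ) - (m:ℚ)⁻¹))]
  ring

lemma R_eq (m n : ℕ) (t : ℚ) :
    (1 / (1 + 2 * (n : ℚ)) * w n (1 - t / 2)) * (((2*n+1)! * m^(2*n) * t.den^n : ℕ) : ℚ)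
      = (Bint m n t : ℚ) := by
  rw [w_expansion, Bint, Finset.mul_sum, Finset.sum_mul]
  push_cast
  rw [Finset.mul_sum]
  refine Finset.sum_congr rfl (fun k hk => ?_)
  have hkn : k ≤ n := Nat.lt_succ_iff.mp (Finset.mem_range.mp hk)
  obtain ⟨l, rfl⟩ : ∃ l, n = k + l := ⟨n - k, by omega⟩
  simp only [Nat.add_sub_cancel_left]
  have hden : (t.den : ℚ) ≠ 0 := by exact_mod_cast t.den_ne_zero
  have h2n : (1 : ℚ) + 2 * (k + l : ℚ) ≠ 0 := by positivity
  have e4 : (t.num : ℚ)^k = t^k * (t.den : ℚ)^k := by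
    have h4 : (t.num : ℚ) = t * t.den :=
      ((eq_div_iff hden).mp (Rat.num_div_den t).symm).symm
    rw [h4]; ring
  have e5 : ((2*(k+l)+1)! : ℚ) = (2*(k+l)+1) * ((2*(k+l))! : ℚ) := by
    exact_mod_cast congrArg (Nat.cast : ℕ → ℚ) (Nat.factorial_succ (2*(k+l)))
  rw [E, e4, e5]
  push_cast
  field_simp
  ring

lemma AB_eq (p : ℕ) [Fact p.Prime] (m n : ℕ) (t : ℚ)
    (hnp : 2 * n + 1 < p) (hm1 : 1 ≤ m)
    (hr : p % m = 1 ∨ p % m = m - 1) (hpeq : m * n + p % m = p) :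
    ((Aint m n t : ℤ) : ZMod p) = ((Bint m n t : ℤ) : ZMod p) := by
  have hpp : p.Prime := Fact.out
  have hfact : ∀ j : ℕ, j < p → ((j ! : ℕ) : ZMod p) ≠ 0 := by
    intro j hj h0
    have h1 := (ZMod.natCast_eq_zero_iff _ _).mp h0
    have := (Nat.Prime.dvd_factorial hpp).mp h1
    omega
  have hmn0 : ((m : ZMod p) * (n : ZMod p) + ((p % m : ℕ) : ZMod p)) = 0 := by
    have h := congrArg (Nat.cast : ℕ → ZMod p) hpeq
    push_cast at h
    rw [h]
    exact_mod_cast ZMod.natCast_self p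
  have hj : ∀ j : ℕ, ((1 : ZMod p) + (j : ZMod p) * m) * ((m : ZMod p) - 1 + (j : ZMod p) * m)
      = -((m : ZMod p)^2 * (((n : ZMod p) - j) * ((n : ZMod p) + j + 1))) := by
    intro j
    rcases hr with h1 | h1
    · rw [h1] at hmn0
      push_cast at hmn0
      linear_combination ((m : ZMod p) * n - 1 + m) * hmn0
    · rw [h1, Nat.cast_sub hm1] at hmn0
      push_cast at hmn0
      linear_combination ((m : ZMod p) * n + 1) * hmn0
  rw [Aint, Bint]
  push_cast
  rw [Finset.mul_sum]
  refine Finset.sum_congr rfl (fun k hk => ?_)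
  have hkn : k ≤ n := Nat.lt_succ_iff.mp (Finset.mem_range.mp hk)
  have hC : (∏ j ∈ range k, (((1 : ZMod p) + (j : ZMod p) * m) * ((m : ZMod p) - 1 + (j : ZMod p) * m)))
      * (∏ j ∈ Ico (2*k+2) (2*n+2), (j : ZMod p)) * (m : ZMod p)^(2*(n-k))
      = ((2*n)! : ℕ) * (m : ZMod p)^(2*n) * ((-1)^k * ((dd n k : ℕ) : ZMod p)) := by
    have hu : (((2*k+1)! : ℕ) : ZMod p) * (((n-k)! : ℕ) : ZMod p) ≠ 0 :=
      mul_ne_zero (hfact _ (by omega)) (hfact _ (by omega))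
    apply mul_right_cancel₀ hu
    have f1 : (∏ j ∈ Ico (2*k+2) (2*n+2), (j : ZMod p)) * (((2*k+1)! : ℕ) : ZMod p)
        = (((2*n+1)! : ℕ) : ZMod p) := by
      have h := congrArg (Nat.cast : ℕ → ZMod p) (prod_Ico_fact (a := 2*k+1) (b := 2*n+1) (by omega))
      push_cast at h
      simpa [show 2*k+1+1 = 2*k+2 by omega, show 2*n+1+1 = 2*n+2 by omega] using h
    have g2 : ∏ j ∈ range k, (((n : ZMod p) - j) * ((n : ZMod p) + j + 1))
        = ((∏ j ∈ range k, (n - j) * (n + j + 1) : ℕ) : ZMod p) := by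
      rw [Nat.cast_prod]
      refine Finset.prod_congr rfl (fun j hj' => ?_)
      have hjn : j ≤ n := by have := Finset.mem_range.mp hj'; omega
      push_cast [Nat.cast_sub hjn]
      ring
    have g3 : ((∏ j ∈ range k, (n - j) * (n + j + 1) : ℕ) : ZMod p) * (((n-k)! : ℕ) : ZMod p)
        = (((n+k)! : ℕ) : ZMod p) := by
      rw [← Nat.cast_mul]
      exact_mod_cast congrArg (Nat.cast : ℕ → ZMod p) (prod_core hkn)
    have g1 : (∏ j ∈ range k, (((1 : ZMod p) + (j : ZMod p) * m) * ((m : ZMod p) - 1 + (j : ZMod p) * m)))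
        = (-1)^k * ((m : ZMod p)^(2*k)) * ∏ j ∈ range k, (((n : ZMod p) - j) * ((n : ZMod p) + j + 1)) := by
      rw [Finset.prod_congr rfl (fun j _ => (hj j).trans (by ring :
        -((m : ZMod p)^2 * (((n : ZMod p) - j) * ((n : ZMod p) + j + 1)))
          = ((-1) * (m : ZMod p)^2) * (((n : ZMod p) - (j:ZMod p)) * ((n : ZMod p) + j + 1))))]
      rw [Finset.prod_mul_distrib, Finset.prod_const, Finset.card_range, mul_pow]
      rw [← pow_mul]
    have f2 : (∏ j ∈ range k, (((1 : ZMod p) + (j : ZMod p) * m) * ((m : ZMod p) - 1 + (j : ZMod p) * m)))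
        * (((n-k)! : ℕ) : ZMod p) = (-1)^k * (m : ZMod p)^(2*k) * (((n+k)! : ℕ) : ZMod p) := by
      rw [g1, g2]
      linear_combination ((-1 : ZMod p)^k * (m : ZMod p)^(2*k)) * g3
    have f3 : ((dd n k : ℕ) : ZMod p) * (((2*k+1)! : ℕ) : ZMod p) * (((n-k)! : ℕ) : ZMod p)
        * (((2*n)! : ℕ) : ZMod p) = (((n+k)! : ℕ) : ZMod p) * (((2*n+1)! : ℕ) : ZMod p) := by
      have h := congrArg (Nat.cast : ℕ → ZMod p) (dd_fact hkn)
      push_cast at h ⊢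
      linear_combination h
    have f4 : (m : ZMod p)^(2*(n-k)) * (m : ZMod p)^(2*k) = (m : ZMod p)^(2*n) := by
      rw [← pow_add]; congr 1; omega
    calc (∏ j ∈ range k, (((1 : ZMod p) + (j : ZMod p) * m) * ((m : ZMod p) - 1 + (j : ZMod p) * m)))
          * (∏ j ∈ Ico (2*k+2) (2*n+2), (j : ZMod p)) * (m : ZMod p)^(2*(n-k))
          * ((((2*k+1)! : ℕ) : ZMod p) * (((n-k)! : ℕ) : ZMod p))
        = ((∏ j ∈ range k, (((1 : ZMod p) + (j : ZMod p) * m) * ((m : ZMod p) - 1 + (j : ZMod p) * m)))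
            * (((n-k)! : ℕ) : ZMod p))
          * ((∏ j ∈ Ico (2*k+2) (2*n+2), (j : ZMod p)) * (((2*k+1)! : ℕ) : ZMod p))
          * (m : ZMod p)^(2*(n-k)) := by ring
      _ = ((-1)^k * (m : ZMod p)^(2*k) * (((n+k)! : ℕ) : ZMod p))
          * (((2*n+1)! : ℕ) : ZMod p) * (m : ZMod p)^(2*(n-k)) := by rw [f2, f1]
      _ = (-1)^k * (((n+k)! : ℕ) : ZMod p) * (((2*n+1)! : ℕ) : ZMod p)
          * ((m : ZMod p)^(2*(n-k)) * (m : ZMod p)^(2*k)) := by ring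
      _ = (-1)^k * (((n+k)! : ℕ) : ZMod p) * (((2*n+1)! : ℕ) : ZMod p)
          * (m : ZMod p)^(2*n) := by rw [f4]
      _ = ((2*n)! : ℕ) * (m : ZMod p)^(2*n) * ((-1)^k * ((dd n k : ℕ) : ZMod p))
          * ((((2*k+1)! : ℕ) : ZMod p) * (((n-k)! : ℕ) : ZMod p)) := by
          linear_combination (-((-1 : ZMod p)^k * (m : ZMod p)^(2*n))) * f3
  linear_combination ((t.num : ZMod p)^k * ((t.den : ZMod p))^(n-k)) * hC

end Stmt0Aux

open Stmt0Aux

theorem stmt0 (m : ℕ) (hm : m = 3 ∨ m = 4 ∨ m = 6) (p : ℕ) [Fact p.Prime] (hp : 3 < p)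
    (t : ℚ) (ht : ¬ p ∣ t.den) :
    ((∑ k ∈ Finset.range (p / m + 1),
        (ascPochhammer ℚ k).eval (1 / (m : ℚ)) * (ascPochhammer ℚ k).eval (((m : ℚ) - 1) / m)
          / (Nat.factorial (2 * k + 1)) * t ^ k : ℚ) : ZMod p)
      = ((1 / (1 + 2 * ((p / m : ℕ) : ℚ)) * w (p / m) (1 - t / 2) : ℚ) : ZMod p) := by
  have hpp : p.Prime := Fact.out
  have hm3 : 3 ≤ m := by rcases hm with rfl|rfl|rfl <;> omega
  have hm6 : m ≤ 6 := by rcases hm with rfl|rfl|rfl <;> omega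
  have h2 : ¬ 2 ∣ p := by
    intro h; rcases hpp.eq_one_or_self_of_dvd 2 h with h'|h' <;> omega
  have h3 : ¬ 3 ∣ p := by
    intro h; rcases hpp.eq_one_or_self_of_dvd 3 h with h'|h' <;> omega
  have hpm : ¬ p ∣ m := by
    intro h
    have hle : p ≤ 6 := le_trans (Nat.le_of_dvd (by omega) h) hm6
    interval_cases p <;> rcases hm with rfl|rfl|rfl <;> omega
  set n := p / m with hn
  have hrm : p % m = 1 ∨ p % m = m - 1 := by
    rcases hm with rfl|rfl|rfl <;> omega
  have hpeq : m * n + p % m = p := Nat.div_add_mod p m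
  have hnp : 2 * n + 1 < p := by
    have hd : p / m ≤ p / 3 := Nat.div_le_div_left hm3 (by norm_num)
    omega
  have hDz : (((2*n+1)! * m^(2*n) * t.den^n : ℕ) : ZMod p) ≠ 0 := by
    push_cast
    refine mul_ne_zero (mul_ne_zero ?_ ?_) ?_
    · intro h0
      have h1 := (ZMod.natCast_eq_zero_iff _ _).mp h0
      have := (Nat.Prime.dvd_factorial hpp).mp h1
      omega
    · exact pow_ne_zero _ (fun h0 => hpm ((ZMod.natCast_eq_zero_iff _ _).mp h0))
    · exact pow_ne_zero _ (fun h0 => ht ((ZMod.natCast_eq_zero_iff _ _).mp h0))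
  have hmQ : (m : ℚ) ≠ 0 := Nat.cast_ne_zero.mpr (by omega)
  have hL := L_eq m n hmQ t
  have hR := R_eq m n t
  have hAB := AB_eq p m n t hnp (by omega) hrm hpeq
  rw [cast_eq_div _ _ _ hDz hL, cast_eq_div _ _ _ hDz hR, hAB]
end

section
/- Let m ∈ {3, 4, 6} and let p be a prime greater than 3. Then for any t ∈ D_p, one has the congruence ∑_{k=0}^{⌊p/m⌋} ((1/m)_k · ((m−1)/m)_k / (2k)!) · t^k ≡ (−1)^{⌊p/m⌋} · w_{⌊p/m⌋}(t/2 − 1) (mod p). -/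
open Finset

lemma choose_key (a b : ℕ) :
    (a+2).choose (b+2) + a.choose (b+2) = 2 * (a+1).choose (b+2) + a.choose b := by
  have h1 : (a+2).choose (b+2) = (a+1).choose (b+1) + (a+1).choose (b+2) :=
    Nat.choose_succ_succ _ _
  have h2 : (a+1).choose (b+1) = a.choose b + a.choose (b+1) := Nat.choose_succ_succ _ _
  have h3 : (a+1).choose (b+2) = a.choose (b+1) + a.choose (b+2) := Nat.choose_succ_succ _ _
  omega

lemma keyA {R : Type*} [CommRing R] (n : ℕ) (x : R) :
    (-1 : R)^n * w n x
      = ∑ k ∈ range (n+1), (-1 : R)^k * ((n+k).choose (2*k) : R) * (2*x+2)^k := by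
  induction n using Nat.twoStepInduction with
  | zero => simp [w]
  | one =>
    rw [Finset.sum_range_succ, Finset.sum_range_one]
    show (-1:R)^1 * (1 + 2*x) = _
    norm_num
    ring
  | more n ih1 ih2 =>
    have ext : ∀ (j M : ℕ), j + 1 ≤ M →
        ∑ k ∈ range (j+1), (-1:R)^k * ((j+k).choose (2*k) : R) * (2*x+2)^k
        = ∑ k ∈ range M, (-1:R)^k * ((j+k).choose (2*k) : R) * (2*x+2)^k := by
      intro j M hM
      apply Finset.sum_subset (Finset.range_subset_range.mpr hM)
      intro k _ hk
      rw [Finset.mem_range] at hk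
      rw [Nat.choose_eq_zero_of_lt (by omega)]
      simp
    have lhs_eq : (-1:R)^(n+2) * w (n+2) x
        = (2 - (2*x+2)) * ((-1:R)^(n+1) * w (n+1) x) - (-1:R)^n * w n x := by
      rw [show w (n+2) x = 2*x*w (n+1) x - w n x from rfl]
      ring
    rw [lhs_eq, ih1, ih2, ext n (n+3) (by omega), ext (n+1) (n+3) (by omega)]
    -- now everything is sums over range (n+3)
    set u : R := 2*x+2 with hu
    have hu1 : u * (∑ k ∈ range (n+3), (-1:R)^k * ((n+1+k).choose (2*k) : R) * u^k)
        = ∑ k ∈ range (n+3), (-1:R)^k * ((n+1+k).choose (2*k) : R) * u^(k+1) := by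
      rw [Finset.mul_sum]
      exact Finset.sum_congr rfl fun k _ => by ring
    have main : ∑ k ∈ range (n+3),
          (((-1:R)^k * ((n+2+k).choose (2*k) : R))
            - 2*((-1:R)^k * ((n+1+k).choose (2*k) : R))
            + ((-1:R)^k * ((n+k).choose (2*k) : R))) * u^k
        = ∑ k ∈ range (n+3), -((-1:R)^k * ((n+1+k).choose (2*k) : R)) * u^(k+1) := by
      rw [show n+3 = n+2+1 by omega]
      rw [Finset.sum_range_succ' (fun k => (((-1:R)^k * ((n+2+k).choose (2*k) : R))
            - 2*((-1:R)^k * ((n+1+k).choose (2*k) : R))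
            + ((-1:R)^k * ((n+k).choose (2*k) : R))) * u^k) (n+2),
          Finset.sum_range_succ (fun k => -((-1:R)^k * ((n+1+k).choose (2*k) : R)) * u^(k+1)) (n+2)]
      have hlast : ((n+1+(n+2)).choose (2*(n+2)) : R) = 0 := by
        rw [Nat.choose_eq_zero_of_lt (by omega)]; norm_num
      rw [hlast]
      norm_num
      rw [← Finset.sum_neg_distrib]
      refine Finset.sum_congr rfl fun k hk => ?_
      have hkey := choose_key (n+1+k) (2*k)
      have hc : ((n+2+(k+1)).choose (2*(k+1)) : R) + ((n+(k+1)).choose (2*(k+1)) : R)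
          = 2 * ((n+1+(k+1)).choose (2*(k+1)) : R) + ((n+1+k).choose (2*k) : R) := by
        have e1 : n+2+(k+1) = n+1+k+2 := by omega
        have e2 : n+(k+1) = n+1+k := by omega
        have e3 : 2*(k+1) = 2*k+2 := by omega
        have e4 : n+1+(k+1) = n+1+k+1 := by omega
        rw [e1, e2, e3, e4]
        exact_mod_cast congrArg (Nat.cast : ℕ → R) hkey
      linear_combination ((-1:R)^(k+1) * u^(k+1)) * hc
    have lh : ∑ k ∈ range (n+3), (-1:R)^k * ((n+2+k).choose (2*k) : R) * u^k
          - 2 * (∑ k ∈ range (n+3), (-1:R)^k * ((n+1+k).choose (2*k) : R) * u^k)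
          + ∑ k ∈ range (n+3), (-1:R)^k * ((n+k).choose (2*k) : R) * u^k
        = ∑ k ∈ range (n+3),
          (((-1:R)^k * ((n+2+k).choose (2*k) : R))
            - 2*((-1:R)^k * ((n+1+k).choose (2*k) : R))
            + ((-1:R)^k * ((n+k).choose (2*k) : R))) * u^k := by
      rw [Finset.mul_sum, ← Finset.sum_sub_distrib, ← Finset.sum_add_distrib]
      exact Finset.sum_congr rfl fun k _ => by ring
    have rh : -(u * (∑ k ∈ range (n+3), (-1:R)^k * ((n+1+k).choose (2*k) : R) * u^k))
        = ∑ k ∈ range (n+3), -((-1:R)^k * ((n+1+k).choose (2*k) : R)) * u^(k+1) := by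
      rw [hu1, ← Finset.sum_neg_distrib]
      exact Finset.sum_congr rfl fun k _ => by ring
    have hgoal := lh.trans (main.trans rh.symm)
    linear_combination (-1 : R) * hgoal

lemma nat_ident (n k : ℕ) (hk : k ≤ n) :
    n.descFactorial k * (n+1).ascFactorial k = (n+k).choose (2*k) * (2*k).factorial := by
  have h1 := Nat.factorial_mul_descFactorial hk
  have h2 := Nat.factorial_mul_ascFactorial n k
  have h3 := Nat.choose_mul_factorial_mul_factorial (show 2*k ≤ n+k by omega)
  have h4 : n + k - 2*k = n - k := by omega
  rw [h4] at h3
  refine Nat.eq_of_mul_eq_mul_right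
    (show 0 < (n-k).factorial * n.factorial from
      Nat.mul_pos (Nat.factorial_pos _) (Nat.factorial_pos _)) ?_
  calc n.descFactorial k * (n+1).ascFactorial k * ((n-k).factorial * n.factorial)
      = ((n-k).factorial * n.descFactorial k) * (n.factorial * (n+1).ascFactorial k) := by ring
    _ = n.factorial * (n+k).factorial := by rw [h1, h2]
    _ = ((n+k).choose (2*k) * (2*k).factorial * (n-k).factorial) * n.factorial := by rw [h3]; ring
    _ = (n+k).choose (2*k) * (2*k).factorial * ((n-k).factorial * n.factorial) := by ring

-- test helpers
lemma asc_prod_range (n k : ℕ) : (n+1).ascFactorial k = ∏ j ∈ range k, (n + 1 + j) := by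
  induction k with
  | zero => simp
  | succ k ih => rw [Nat.ascFactorial_succ, prod_range_succ, ih]; ring

lemma prod_fact {K : Type*} [CommRing K] (c a mm : K) (h : a * mm = c) (k : ℕ) :
    ∏ j ∈ range k, (c + (j : K) * mm) = mm ^ k * ∏ j ∈ range k, (a + j) := by
  rw [show mm ^ k = ∏ _j ∈ range k, mm by simp, ← prod_mul_distrib]
  refine prod_congr rfl fun j _ => ?_
  rw [← h]; ring

lemma prod_neg_desc {K : Type*} [CommRing K] (n k : ℕ) (hk : k ≤ n) :
    ∏ j ∈ range k, (-(n : K) + j) = (-1 : K) ^ k * (n.descFactorial k : K) := by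
  rw [Nat.descFactorial_eq_prod_range, Nat.cast_prod,
    show (-1 : K) ^ k = ∏ _j ∈ range k, (-1 : K) by simp, ← prod_mul_distrib]
  refine prod_congr rfl fun j hj => ?_
  rw [mem_range] at hj
  rw [Nat.cast_sub (by omega)]
  ring

lemma prod_asc {K : Type*} [CommRing K] (n k : ℕ) :
    ∏ j ∈ range k, ((n : K) + 1 + j) = ((n+1).ascFactorial k : K) := by
  rw [asc_prod_range, Nat.cast_prod]
  exact prod_congr rfl fun j _ => by push_cast; ring

-- eval of ascPochhammer at 1/m and (m-1)/m
lemma eval_div_prod (m : ℕ) (hm : (m:ℚ) ≠ 0) (a : ℚ) (k : ℕ) :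
    (ascPochhammer ℚ k).eval (a / m) = ((∏ j ∈ range k, (a + j * m)) : ℚ) / (m:ℚ)^k := by
  induction k with
  | zero => simp
  | succ k ih =>
    rw [ascPochhammer_succ_eval, ih, prod_range_succ, pow_succ]
    field_simp
    rw [mul_comm]; congr 1; exact prod_congr rfl fun j _ => by ring

-- denominator coprimality helpers
section dcop
variable (p : ℕ) [hp : Fact p.Prime]

lemma dcop_intCast (z : ℤ) : ¬ (p ∣ ((z : ℚ)).den) := by
  rw [Rat.den_intCast, Nat.dvd_one]
  exact hp.out.one_lt.ne'

lemma dcop_add {a b : ℚ} (ha : ¬ (p ∣ a.den)) (hb : ¬ (p ∣ b.den)) : ¬ (p ∣ (a+b).den) := by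
  intro h
  rcases (Nat.Prime.dvd_mul hp.out).mp (h.trans (Rat.add_den_dvd a b)) with h' | h'
  exacts [ha h', hb h']

lemma dcop_mul {a b : ℚ} (ha : ¬ (p ∣ a.den)) (hb : ¬ (p ∣ b.den)) : ¬ (p ∣ (a*b).den) := by
  intro h
  rcases (Nat.Prime.dvd_mul hp.out).mp (h.trans (Rat.mul_den_dvd a b)) with h' | h'
  exacts [ha h', hb h']

lemma dcop_one : ¬ (p ∣ (1:ℚ).den) := by
  norm_num
  exact hp.out.one_lt.ne'

lemma dcop_pow {a : ℚ} (ha : ¬ (p ∣ a.den)) (k : ℕ) : ¬ (p ∣ (a^k).den) := by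
  induction k with
  | zero => simpa [pow_zero] using dcop_one p
  | succ k ih => rw [pow_succ]; exact dcop_mul p ih ha

lemma dcop_sum {s : Finset ℕ} {f : ℕ → ℚ} (h : ∀ i ∈ s, ¬ (p ∣ (f i).den)) :
    ¬ (p ∣ (∑ i ∈ s, f i).den) := by
  classical
  induction s using Finset.induction_on with
  | empty => simpa using dcop_intCast p 0
  | insert _ _ hx ih =>
    rw [Finset.sum_insert hx]
    exact dcop_add p (h _ (Finset.mem_insert_self _ _))
      (ih fun i hi => h i (Finset.mem_insert_of_mem hi))

lemma dcop_inv_nat {c : ℕ} (hc : ¬ (p ∣ c)) : ¬ (p ∣ (((c:ℚ))⁻¹).den) := by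
  intro h
  have h1 : ((c:ℚ))⁻¹ = ((1:ℤ) : ℚ) / ((c:ℤ) : ℚ) := by push_cast; rw [one_div]
  have h2 : ((c:ℚ))⁻¹ = Rat.divInt (1 : ℤ) (c : ℤ) := by rw [h1, Rat.divInt_eq_div]
  have h3 := Rat.den_dvd (1:ℤ) (c:ℤ)
  rw [← h2] at h3
  exact hc (Int.ofNat_dvd.mp ((Int.ofNat_dvd.mpr h).trans h3))
end dcop

def auxP1 (m k : ℕ) : ℤ := ∏ j ∈ range k, (1 + (j:ℤ) * m)
def auxP2 (m k : ℕ) : ℤ := ∏ j ∈ range k, ((m:ℤ) - 1 + (j:ℤ) * m)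
def auxS (m n k : ℕ) : ℤ := (-1)^k * ((n+k).choose (2*k) * m^(2*k) * (2*k).factorial : ℕ)

lemma auxP1_cast {K : Type*} [CommRing K] (m k : ℕ) :
    ((auxP1 m k : ℤ) : K) = ∏ j ∈ range k, (1 + (j:K) * m) := by
  rw [auxP1]; push_cast; rfl

lemma auxP2_cast {K : Type*} [CommRing K] (m k : ℕ) :
    ((auxP2 m k : ℤ) : K) = ∏ j ∈ range k, ((m:K) - 1 + (j:K) * m) := by
  rw [auxP2]; push_cast; rfl

lemma auxS_cast {K : Type*} [CommRing K] (m n k : ℕ) :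
    ((auxS m n k : ℤ) : K)
      = (-1:K)^k * ((n+k).choose (2*k) : K) * (m:K)^(2*k) * ((2*k).factorial : K) := by
  rw [auxS]; push_cast; ring

lemma step3 (p : ℕ) [Fact p.Prime] (m n k : ℕ) (hk : k ≤ n) (a b : ZMod p)
    (ha : a * m = 1) (hb : b * m = (m : ZMod p) - 1)
    (hab : (∏ j ∈ range k, (a + j)) * (∏ j ∈ range k, (b + j))
      = (-1:ZMod p)^k * (n.descFactorial k : ZMod p) * ((n+1).ascFactorial k : ZMod p)) :
    ((auxP1 m k * auxP2 m k : ℤ) : ZMod p) = ((auxS m n k : ℤ) : ZMod p) := by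
  have e1 : ((auxP1 m k : ℤ) : ZMod p) = (m : ZMod p)^k * ∏ j ∈ range k, (a + j) := by
    rw [auxP1_cast]; exact prod_fact 1 a m ha k
  have e2 : ((auxP2 m k : ℤ) : ZMod p) = (m : ZMod p)^k * ∏ j ∈ range k, (b + j) := by
    rw [auxP2_cast]; exact prod_fact ((m : ZMod p) - 1) b m hb k
  rw [Int.cast_mul, e1, e2, auxS_cast]
  have hni := congrArg (Nat.cast : ℕ → ZMod p) (nat_ident n k hk)
  push_cast at hni
  linear_combination ((m : ZMod p)^k * (m : ZMod p)^k) * hab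
    + ((-1 : ZMod p)^k * (m : ZMod p)^(2*k)) * hni

theorem stmt1 (m : ℕ) (hm : m = 3 ∨ m = 4 ∨ m = 6) (p : ℕ) [Fact p.Prime] (hp : 3 < p)
    (t : ℚ) (ht : ¬ p ∣ t.den) :
    ((∑ k ∈ Finset.range (p / m + 1),
        (ascPochhammer ℚ k).eval (1 / (m : ℚ)) * (ascPochhammer ℚ k).eval (((m : ℚ) - 1) / m)
          / (Nat.factorial (2 * k)) * t ^ k : ℚ) : ZMod p)
      = (((-1 : ℚ) ^ (p / m) * w (p / m) (t / 2 - 1) : ℚ) : ZMod p) := by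
  have hpp : p.Prime := Fact.out
  set n := p / m with hn
  have hm3 : 3 ≤ m ∧ m ≤ 6 := by rcases hm with rfl|rfl|rfl <;> norm_num
  have hm0Q : (m:ℚ) ≠ 0 := Nat.cast_ne_zero.mpr (by omega)
  have hpm : ¬ p ∣ m := by
    intro h
    have hle := Nat.le_of_dvd (by omega) h
    rcases hm with rfl|rfl|rfl <;> interval_cases p <;> revert h hpp <;> decide
  have h2 : ¬ (2 ∣ p) := fun h => by
    have := (Nat.prime_dvd_prime_iff_eq Nat.prime_two hpp).mp h; omega
  have h3 : ¬ (3 ∣ p) := fun h => by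
    have := (Nat.prime_dvd_prime_iff_eq Nat.prime_three hpp).mp h; omega
  have hr : p % m = 1 ∨ p % m = m - 1 := by rcases hm with rfl|rfl|rfl <;> omega
  have h2k : ∀ k ≤ n, 2 * k < p := by
    intro k hk; rw [hn] at hk; rcases hm with rfl|rfl|rfl <;> omega
  -- ZMod facts
  have hmn : ((m : ZMod p)) * (n : ZMod p) = -((p % m : ℕ) : ZMod p) := by
    have hcast : ((m * (p/m) + p % m : ℕ) : ZMod p) = 0 := by
      rw [Nat.div_add_mod]; exact ZMod.natCast_self p
    push_cast at hcast
    rw [← hn] at hcast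
    linear_combination hcast
  obtain ⟨a, b, ha, hb, hab⟩ : ∃ a b : ZMod p, a * m = 1 ∧ b * m = (m : ZMod p) - 1 ∧
      ∀ k, k ≤ n → (∏ j ∈ range k, (a + j)) * (∏ j ∈ range k, (b + j))
        = (-1:ZMod p)^k * (n.descFactorial k : ZMod p) * ((n+1).ascFactorial k : ZMod p) := by
    rcases hr with hr1 | hr2
    · refine ⟨-(n : ZMod p), (n : ZMod p) + 1, ?_, ?_, ?_⟩
      · rw [hr1] at hmn; push_cast at hmn; linear_combination -hmn
      · rw [hr1] at hmn; push_cast at hmn; linear_combination hmn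
      · intro k hk
        rw [prod_neg_desc n k hk, prod_asc n k]
    · have hcast : ((p % m : ℕ) : ZMod p) = (m : ZMod p) - 1 := by
        rw [hr2]; push_cast [Nat.cast_sub (by omega : 1 ≤ m)]; ring
      rw [hcast] at hmn
      refine ⟨(n : ZMod p) + 1, -(n : ZMod p), ?_, ?_, ?_⟩
      · linear_combination hmn
      · linear_combination -hmn
      · intro k hk
        rw [prod_neg_desc n k hk, prod_asc n k]
        ring
  have hdvd : ∀ k, k ≤ n → (p:ℤ) ∣ (auxP1 m k * auxP2 m k - auxS m n k) := by
    intro k hk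
    rw [← ZMod.intCast_zmod_eq_zero_iff_dvd, Int.cast_sub, sub_eq_zero]
    exact step3 p m n k hk a b ha hb (hab k hk)
  have hBex : ∀ k, ∃ B : ℤ, k ≤ n → auxP1 m k * auxP2 m k - auxS m n k = p * B := by
    intro k
    by_cases hk : k ≤ n
    · obtain ⟨B, hB⟩ := hdvd k hk
      exact ⟨B, fun _ => hB⟩
    · exact ⟨0, fun h => absurd h hk⟩
  choose B hB using hBex
  -- coefficient identity over ℚ
  have hfac_ne : ∀ k : ℕ, ((2*k).factorial : ℚ) ≠ 0 :=
    fun k => Nat.cast_ne_zero.mpr (Nat.factorial_ne_zero _)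
  have hcoeff : ∀ k ∈ range (n+1),
      (ascPochhammer ℚ k).eval (1 / (m : ℚ)) * (ascPochhammer ℚ k).eval (((m : ℚ) - 1) / m)
          / (Nat.factorial (2 * k)) * t ^ k
      = (-1:ℚ)^k * ((n+k).choose (2*k) : ℚ) * t^k
        + (p:ℚ) * (((B k : ℤ):ℚ) * (((m^(2*k) * (2*k).factorial : ℕ) : ℚ))⁻¹ * t^k) := by
    intro k hk
    rw [mem_range] at hk
    have hk' : k ≤ n := by omega
    rw [eval_div_prod m hm0Q 1 k, eval_div_prod m hm0Q ((m:ℚ)-1) k]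
    have hBkQ := congrArg (Int.cast : ℤ → ℚ) (hB k hk')
    rw [Int.cast_sub, Int.cast_mul, auxP1_cast, auxP2_cast, auxS_cast] at hBkQ
    push_cast at hBkQ
    have hmpow : ((m:ℚ))^k ≠ 0 := pow_ne_zero _ hm0Q
    have hnat : (((m^(2*k) * (2*k).factorial : ℕ) : ℚ)) = (m:ℚ)^(2*k) * ((2*k).factorial : ℚ) := by
      push_cast; ring
    rw [hnat]
    field_simp
    rw [show ∏ x ∈ range k, ((m:ℚ) - 1 + m * x) = ∏ x ∈ range k, ((m:ℚ) - 1 + x * m) from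
      prod_congr rfl fun x _ => by ring]
    linear_combination (t^k * ((m:ℚ))^(2*k)) * hBkQ
  have h1 : (-1:ℚ)^n * w n (t/2-1)
      = ∑ k ∈ range (n+1), (-1:ℚ)^k * ((n+k).choose (2*k) : ℚ) * t^k := by
    have h := keyA n (t/2 - 1)
    rw [show (2*((t:ℚ)/2-1)+2) = t by ring] at h
    exact h
  rw [h1]
  have hsum : (∑ k ∈ range (n+1),
      (ascPochhammer ℚ k).eval (1 / (m : ℚ)) * (ascPochhammer ℚ k).eval (((m : ℚ) - 1) / m)
        / (Nat.factorial (2 * k)) * t ^ k)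
      = (∑ k ∈ range (n+1), (-1:ℚ)^k * ((n+k).choose (2*k) : ℚ) * t^k)
        + (p:ℚ) * ∑ k ∈ range (n+1),
            ((B k : ℤ):ℚ) * (((m^(2*k) * (2*k).factorial : ℕ) : ℚ))⁻¹ * t^k := by
    rw [Finset.mul_sum, ← Finset.sum_add_distrib]
    exact Finset.sum_congr rfl hcoeff
  rw [hsum]
  have hconv : ∀ q : ℚ, ¬ p ∣ q.den → ((q.den : ZMod p) ≠ 0) := fun q h => by
    rw [Ne, ZMod.natCast_eq_zero_iff]; exact h
  have dnat : ∀ c : ℕ, ¬ p ∣ ((c:ℚ)).den := fun c => by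
    rw [show ((c:ℚ)) = ((c:ℤ):ℚ) by push_cast; rfl]; exact dcop_intCast p (c:ℤ)
  have dneg1 : ¬ p ∣ ((-1:ℚ)).den := by
    rw [show ((-1:ℚ)) = ((-1:ℤ):ℚ) by push_cast; rfl]; exact dcop_intCast p (-1)
  have hdenR : ¬ p ∣ (∑ k ∈ range (n+1), (-1:ℚ)^k * ((n+k).choose (2*k) : ℚ) * t^k).den := by
    apply dcop_sum
    intro k hk
    exact dcop_mul p (dcop_mul p (dcop_pow p dneg1 k) (dnat _)) (dcop_pow p ht k)
  have hdenz : ¬ p ∣ (∑ k ∈ range (n+1),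
      ((B k : ℤ):ℚ) * (((m^(2*k) * (2*k).factorial : ℕ) : ℚ))⁻¹ * t^k).den := by
    apply dcop_sum
    intro k hk
    rw [mem_range] at hk
    refine dcop_mul p (dcop_mul p (dcop_intCast p _) (dcop_inv_nat p ?_)) (dcop_pow p ht k)
    intro hdd
    rcases (Nat.Prime.dvd_mul hpp).mp hdd with h' | h'
    · exact hpm (hpp.dvd_of_dvd_pow h')
    · have hf := (Nat.Prime.dvd_factorial hpp).mp h'
      have hg := h2k k (by omega)
      omega
  have hdenpz : ¬ p ∣ (((p:ℚ)) * ∑ k ∈ range (n+1),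
      ((B k : ℤ):ℚ) * (((m^(2*k) * (2*k).factorial : ℕ) : ℚ))⁻¹ * t^k).den :=
    dcop_mul p (dnat p) hdenz
  rw [Rat.cast_add_of_ne_zero (hconv _ hdenR) (hconv _ hdenpz),
      Rat.cast_mul_of_ne_zero (hconv _ (dnat p)) (hconv _ hdenz),
      Rat.cast_natCast, ZMod.natCast_self, zero_mul, add_zero]
end

section
/- Let m ∈ {3, 4, 6} and let p be a prime greater than 3. Then for any t ∈ D_p, one has the congruence ∑_{k=(p+1)/2}^{⌊(m−1)p/m⌋} ((1/m)_k · ((m−1)/m)_k / (2k)!) · t^k ≡ ((−1)^{⌊p/m⌋}/m) · ( w_{⌊(m−1)p/m⌋}(t/2 − 1) − w_{⌊p/m⌋}(t/2 − 1) ) (mod p). -/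
open Finset

namespace Stmt3Aux

lemma w_two_add {R : Type*} [CommRing R] (n : ℕ) (x : R) :
    w (n + 2) x = 2 * x * w (n + 1) x - w n x := rfl

lemma poch_eval_prod (k : ℕ) (x : ℚ) :
    (ascPochhammer ℚ k).eval x = ∏ j ∈ range k, (x + j) := by
  induction k with
  | zero => simp
  | succ k ih => rw [ascPochhammer_succ_eval, ih, prod_range_succ]

lemma cast_asc_prod {R : Type*} [CommSemiring R] (x L : ℕ) :
    ((x.ascFactorial L : ℕ) : R) = ∏ i ∈ range L, ((x : R) + i) := by
  induction L with
  | zero => simp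
  | succ L ih =>
      rw [Nat.ascFactorial_succ, prod_range_succ, ← ih]
      push_cast
      ring

lemma asc_split (x a b : ℕ) :
    x.ascFactorial (a + b) = x.ascFactorial a * (x + a).ascFactorial b := by
  induction b with
  | zero => simp
  | succ b ih =>
      rw [show a + (b+1) = (a+b)+1 from rfl, Nat.ascFactorial_succ, ih,
        Nat.ascFactorial_succ]
      ring

lemma prod_neg_shift {R : Type*} [CommRing R] (a L : ℕ) (h : L ≤ a + 1) :
    (∏ i ∈ range L, (-(a : R) + i)) = (-1) ^ L * ∏ i ∈ range L, (((a + 1 - L : ℕ) : R) + i) := by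
  rw [← Finset.prod_range_reflect (fun i => -(a : R) + i) L]
  have hcg : ∀ i ∈ range L, -(a:R) + ((L - 1 - i : ℕ) : R)
      = (-1) * ((((a + 1 - L : ℕ)) : R) + i) := by
    intro i hi
    rw [mem_range] at hi
    have e1 : L - 1 - i = L - (i+1) := by omega
    rw [e1, Nat.cast_sub (by omega : i + 1 ≤ L), Nat.cast_sub h]
    push_cast
    ring
  rw [Finset.prod_congr rfl hcg, Finset.prod_mul_distrib, Finset.prod_const, card_range]

lemma num_eq (x : ℚ) : (x.num : ℚ) = x * x.den := by
  have hd : (x.den : ℚ) ≠ 0 := Nat.cast_ne_zero.mpr x.den_nz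
  exact (div_eq_iff hd).mp (Rat.num_div_den x)

lemma ratCast_num_den {p : ℕ} [Fact p.Prime] (x : ℚ) (a b : ℤ)
    (hb : (b : ZMod p) ≠ 0) (hx : x * b = a) :
    ((x : ZMod p) = (a : ZMod p) / (b : ZMod p)) ∧ ((x.den : ZMod p) ≠ 0) := by
  have hq : (x.num : ℚ) * b = a * x.den := by
    rw [num_eq x, mul_right_comm, hx]
  have hkey : x.num * b = a * x.den := by exact_mod_cast hq
  have hdenK : ((x.den : ℕ) : ZMod p) ≠ 0 := by
    intro h0
    rw [ZMod.natCast_eq_zero_iff] at h0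
    have hdvd : (x.den : ℤ) ∣ x.num * b := ⟨a, by rw [hkey]; ring⟩
    have hdvd2 : x.den ∣ (x.num * b).natAbs := by
      have := Int.natAbs_dvd_natAbs.mpr hdvd
      simpa using this
    rw [Int.natAbs_mul] at hdvd2
    have hdvd3 : x.den ∣ b.natAbs :=
      (Nat.Coprime.dvd_of_dvd_mul_left (x.reduced.symm) hdvd2)
    have : (p : ℤ) ∣ b := Int.dvd_natAbs.mp (by exact_mod_cast h0.trans hdvd3)
    exact hb ((ZMod.intCast_zmod_eq_zero_iff_dvd b p).mpr this)
  constructor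
  · rw [Rat.cast_def, div_eq_div_iff hdenK hb]
    have := congrArg (fun z : ℤ => (z : ZMod p)) hkey
    push_cast at this
    exact this
  · exact hdenK

lemma ratCast_sum {p : ℕ} [Fact p.Prime] (s : Finset ℕ) (f : ℕ → ℚ)
    (h : ∀ i ∈ s, ((f i).den : ZMod p) ≠ 0) :
    (((∑ i ∈ s, f i : ℚ) : ZMod p) = ∑ i ∈ s, ((f i : ℚ) : ZMod p)) ∧
      (((∑ i ∈ s, f i).den : ZMod p) ≠ 0) := by
  classical
  induction s using Finset.induction with
  | empty => simp
  | @insert a s ha ih =>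
      have hfa := h a (mem_insert_self a s)
      have ihs := ih (fun i hi => h i (mem_insert_of_mem hi))
      rw [Finset.sum_insert ha, Finset.sum_insert ha]
      have hden : (((f a + ∑ i ∈ s, f i).den : ℕ) : ZMod p) ≠ 0 := by
        refine (ratCast_num_den (f a + ∑ i ∈ s, f i)
          ((f a).num * (∑ i ∈ s, f i).den + (∑ i ∈ s, f i).num * (f a).den)
          ((f a).den * (∑ i ∈ s, f i).den) ?_ ?_).2
        · push_cast
          exact mul_ne_zero hfa ihs.2
        · push_cast
          rw [num_eq (f a), num_eq (∑ i ∈ s, f i)]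
          ring
      refine ⟨?_, hden⟩
      rw [Rat.cast_add_of_ne_zero hfa ihs.2, ihs.1]

lemma pascal2 (a b : ℕ) :
    (a+2).choose (b+2) + a.choose (b+2) = a.choose b + 2 * ((a+1).choose (b+2)) := by
  have h1 : (a+2).choose (b+2) = (a+1).choose (b+1) + (a+1).choose (b+2) :=
    Nat.choose_succ_succ' (a+1) (b+1)
  have h2 : (a+1).choose (b+1) = a.choose b + a.choose (b+1) := Nat.choose_succ_succ' a b
  have h3 : (a+1).choose (b+2) = a.choose (b+1) + a.choose (b+2) := Nat.choose_succ_succ' a (b+1)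
  omega

lemma w_eq (n : ℕ) (t : ℚ) :
    w n (t/2 - 1) = ∑ k ∈ range (n+1), (-1:ℚ)^(n+k) * ((n+k).choose (2*k) : ℚ) * t^k := by
  induction n using Nat.strong_induction_on with
  | _ n ih =>
    match n, ih with
    | 0, _ => norm_num [w]
    | 1, _ =>
        rw [Finset.sum_range_succ, Finset.sum_range_one]
        show 1 + 2 * (t/2 - 1) = _
        norm_num
        ring
    | (n+2), ih =>
        rw [w_two_add, ih (n+1) (by omega), ih n (by omega)]
        set f : ℕ → ℕ → ℚ := fun N k => (-1:ℚ)^(N+k) * ((N+k).choose (2*k) : ℚ) with hf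
        have hchoose0 : ∀ M k : ℕ, M < k → f M k = 0 := by
          intro M k hMk
          simp only [hf]
          rw [Nat.choose_eq_zero_of_lt (by omega)]
          simp
        have hA1 : ∑ k ∈ range (n+2), f (n+1) k * t^k
            = f (n+1) 0 + ∑ k ∈ range (n+2), f (n+1) (k+1) * t^(k+1) := by
          rw [Finset.sum_range_succ' (fun k => f (n+1) k * t^k) (n+1)]
          have : ∑ k ∈ range (n+1), f (n+1) (k+1) * t^(k+1)
              = ∑ k ∈ range (n+2), f (n+1) (k+1) * t^(k+1) := by
            refine Finset.sum_subset (by apply Finset.range_subset_range.mpr; omega) ?_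
            intro x hx hnx
            simp only [mem_range] at hx hnx
            rw [hchoose0 (n+1) (x+1) (by omega)]
            ring
          rw [← this]
          ring
        have hB1 : ∑ k ∈ range (n+1), f n k * t^k
            = f n 0 + ∑ k ∈ range (n+2), f n (k+1) * t^(k+1) := by
          rw [Finset.sum_range_succ' (fun k => f n k * t^k) n]
          have : ∑ k ∈ range n, f n (k+1) * t^(k+1)
              = ∑ k ∈ range (n+2), f n (k+1) * t^(k+1) := by
            refine Finset.sum_subset (by apply Finset.range_subset_range.mpr; omega) ?_
            intro x hx hnx
            simp only [mem_range] at hx hnx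
            rw [hchoose0 n (x+1) (by omega)]
            ring
          rw [← this]
          ring
        have hC1 : ∑ k ∈ range (n+3), f (n+2) k * t^k
            = f (n+2) 0 + ∑ k ∈ range (n+2), f (n+2) (k+1) * t^(k+1) := by
          rw [Finset.sum_range_succ' (fun k => f (n+2) k * t^k) (n+2)]
          ring
        have htA : t * ∑ k ∈ range (n+2), f (n+1) k * t^k
            = ∑ k ∈ range (n+2), f (n+1) k * t^(k+1) := by
          rw [Finset.mul_sum]
          exact Finset.sum_congr rfl fun k _ => by ring
        have hterm : ∀ k ∈ range (n+2),
            f (n+1) k * t^(k+1) - 2 * (f (n+1) (k+1) * t^(k+1)) - f n (k+1) * t^(k+1)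
            = f (n+2) (k+1) * t^(k+1) := by
          intro k hk
          have hp := pascal2 (n+k+1) (2*k)
          have hc : ((n+k+3).choose (2*k+2) : ℚ) + ((n+k+1).choose (2*k+2) : ℚ)
              = ((n+k+1).choose (2*k) : ℚ) + 2*((n+k+2).choose (2*k+2) : ℚ) := by
            exact_mod_cast congrArg (fun z : ℕ => (z : ℚ))
              (by convert hp using 3 <;> omega)
          simp only [hf]
          have e1 : n+1+k = n+k+1 := by ring
          have e2 : n+1+(k+1) = n+k+2 := by ring
          have e3 : n+(k+1) = n+k+1 := by ring
          have e4 : n+2+(k+1) = n+k+3 := by ring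
          have e5 : 2*(k+1) = 2*k+2 := by ring
          rw [e1, e2, e3, e4, e5]
          have s1 : (-1:ℚ)^(n+k+2) = (-1)^(n+k) := by
            rw [pow_add]; norm_num
          have s2 : (-1:ℚ)^(n+k+1) = -(-1)^(n+k) := by
            rw [pow_add]; norm_num
          have s3 : (-1:ℚ)^(n+k+3) = -(-1)^(n+k) := by
            rw [show n+k+3 = (n+k+1)+2 by ring, pow_add, s2]; norm_num
          rw [s1, s2, s3]
          linear_combination ((-1:ℚ)^(n+k) * t^(k+1)) * hc
        have hsum : ∑ k ∈ range (n+2),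
            (f (n+1) k * t^(k+1) - 2 * (f (n+1) (k+1) * t^(k+1)) - f n (k+1) * t^(k+1))
            = ∑ k ∈ range (n+2), f (n+2) (k+1) * t^(k+1) :=
          Finset.sum_congr rfl hterm
        rw [Finset.sum_sub_distrib, Finset.sum_sub_distrib, ← Finset.mul_sum] at hsum
        have hconst : f (n+2) 0 = - 2 * f (n+1) 0 - f n 0 := by
          simp only [hf]
          norm_num [pow_add]
          ring
        rw [hB1, hC1, hconst]
        have h2A : 2 * (t/2 - 1) * ∑ k ∈ range (n+2), f (n+1) k * t^k
            = t * ∑ k ∈ range (n+2), f (n+1) k * t^k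
              - 2 * ∑ k ∈ range (n+2), f (n+1) k * t^k := by ring
        rw [h2A, htA, hA1]
        linear_combination hsum

lemma choose_asc (M k : ℕ) (h : k ≤ M) :
    (M+k).choose (2*k) * (2*k).factorial = (M-k+1).ascFactorial (2*k) := by
  have h1 := Nat.choose_mul_factorial_mul_factorial (show 2*k ≤ M+k by omega)
  have h2 := Nat.factorial_mul_ascFactorial (M-k) (2*k)
  rw [show M+k-2*k = M-k by omega] at h1
  rw [show M-k+(2*k) = M+k by omega] at h2
  refine Nat.eq_of_mul_eq_mul_right (Nat.factorial_pos (M-k)) ?_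
  rw [h1, ← h2]
  ring

lemma cast_asc_p_sub (p : ℕ) [Fact p.Prime] (x L : ℕ) (hxp : x ≤ p) (hL : L ≤ x + 1) :
    (((p-x).ascFactorial L : ℕ) : ZMod p) = (-1)^L * (((x+1-L).ascFactorial L : ℕ) : ZMod p) := by
  rw [cast_asc_prod, cast_asc_prod]
  have hpx : ((p - x : ℕ) : ZMod p) = -(x : ZMod p) := by
    rw [Nat.cast_sub hxp, ZMod.natCast_self]
    ring
  rw [hpx, prod_neg_shift _ _ hL]

lemma cast_asc_p_sub_zero (p : ℕ) [Fact p.Prime] (x L : ℕ) (hxp : x ≤ p) (hxL : x < L) :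
    (((p-x).ascFactorial L : ℕ) : ZMod p) = 0 := by
  rw [cast_asc_prod]
  refine Finset.prod_eq_zero (Finset.mem_range.mpr hxL) ?_
  rw [Nat.cast_sub hxp, ZMod.natCast_self]
  ring

lemma cast_asc_p_succ (p : ℕ) [Fact p.Prime] (L : ℕ) :
    (((p+1).ascFactorial L : ℕ) : ZMod p) = (L.factorial : ZMod p) := by
  rw [cast_asc_prod, ← Nat.one_ascFactorial L, cast_asc_prod]
  refine Finset.prod_congr rfl fun i _ => ?_
  push_cast [ZMod.natCast_self]
  ring

theorem main (p : ℕ) [Fact p.Prime] (m n N r : ℕ) (hp5 : 5 ≤ p) (hm3 : 3 ≤ m)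
    (h1 : m * n + r = p) (h2 : r = 1 ∨ r = m - 1) (h3 : n + N + 1 = p)
    (hpm : ¬ p ∣ m) (t : ℚ) (ht : ¬ p ∣ t.den) :
    ((∑ k ∈ Finset.Icc ((p + 1) / 2) N,
        (ascPochhammer ℚ k).eval (1 / (m : ℚ)) * (ascPochhammer ℚ k).eval (((m : ℚ) - 1) / m)
          / (Nat.factorial (2 * k)) * t ^ k : ℚ) : ZMod p)
      = (((-1 : ℚ) ^ n / (m : ℚ)
          * (w N (t / 2 - 1) - w n (t / 2 - 1)) : ℚ) : ZMod p) := by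
  have hP : p.Prime := Fact.out
  have hodd : p % 2 = 1 := Nat.odd_iff.mp (hP.odd_of_ne_two (by omega))
  have hrr : 1 ≤ r ∧ r ≤ m - 1 := by rcases h2 with rfl | rfl <;> omega
  have hmn : 3*n ≤ m*n := Nat.mul_le_mul_right n hm3
  have hn3 : 3*n + 1 ≤ p := by omega
  have hnk0 : n < (p+1)/2 := by omega
  have hk0N : (p+1)/2 ≤ N := by omega
  have hNp : N < p := by omega
  have hmK : ((m:ℕ) : ZMod p) ≠ 0 :=
    fun h => hpm ((ZMod.natCast_eq_zero_iff m p).mp h)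
  have htK : ((t.den : ℕ) : ZMod p) ≠ 0 :=
    fun h => ht ((ZMod.natCast_eq_zero_iff _ p).mp h)
  have hfactK : ∀ j : ℕ, j < p → ((j.factorial : ℕ) : ZMod p) ≠ 0 := by
    intro j hj h0
    rw [ZMod.natCast_eq_zero_iff] at h0
    exact absurd ((Nat.Prime.dvd_factorial hP).mp h0) (by omega)
  have hm0 : (m : ℚ) ≠ 0 := Nat.cast_ne_zero.mpr (by omega)
  have htden0 : (t.den : ℚ) ≠ 0 := Nat.cast_ne_zero.mpr t.den_nz
  -- parity
  have hpar : (-1 : ZMod p)^N = (-1 : ZMod p)^n := by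
    have h9 : N = n + 2 * ((N-n)/2) := by omega
    rw [h9, pow_add, pow_mul]
    norm_num
  ------------------------------------------------------------------
  -- choose congruences
  ------------------------------------------------------------------
  have hchoose1 : ∀ k, k ≤ n → (((N+k).choose (2*k) : ℕ) : ZMod p) = (((n+k).choose (2*k) : ℕ) : ZMod p) := by
    intro k hk
    have hA := choose_asc N k (by omega)
    have hB := choose_asc n k (by omega)
    have hcastA := congrArg (fun z : ℕ => (z : ZMod p)) hA
    have hcastB := congrArg (fun z : ℕ => (z : ZMod p)) hB
    push_cast at hcastA hcastB
    rw [show N-k+1 = p-(n+k) by omega] at hcastA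
    have h7 := cast_asc_p_sub p (n+k) (2*k) (by omega) (by omega)
    rw [show n+k+1-(2*k) = n-k+1 by omega] at h7
    rw [h7, show ((-1 : ZMod p))^(2*k) = 1 by rw [pow_mul]; norm_num, one_mul] at hcastA
    have hfne := hfactK (2*k) (by omega)
    refine mul_right_cancel₀ hfne ?_
    rw [hcastA, hcastB]
  have hchoose2 : ∀ k, n < k → 2*k < p → k ≤ N → (((N+k).choose (2*k) : ℕ) : ZMod p) = 0 := by
    intro k hkn hkp hkN
    have hA := choose_asc N k (by omega)
    have hcastA := congrArg (fun z : ℕ => (z : ZMod p)) hA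
    push_cast at hcastA
    rw [show N-k+1 = p-(n+k) by omega] at hcastA
    rw [cast_asc_p_sub_zero p (n+k) (2*k) (by omega) (by omega)] at hcastA
    have hfne := hfactK (2*k) (by omega)
    exact (mul_eq_zero.mp hcastA).resolve_right hfne
  ------------------------------------------------------------------
  -- the right side as a sum
  ------------------------------------------------------------------
  have hRdef : (-1 : ℚ) ^ n / (m : ℚ) * (w N (t / 2 - 1) - w n (t / 2 - 1))
      = ∑ k ∈ range (N+1),
          (-1:ℚ)^n * ((-1:ℚ)^(N+k) * ((N+k).choose (2*k) : ℚ)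
            - (-1:ℚ)^(n+k) * ((n+k).choose (2*k) : ℚ)) / m * t^k := by
    rw [w_eq N t, w_eq n t]
    have hext : ∑ k ∈ range (n+1), (-1:ℚ)^(n+k) * ((n+k).choose (2*k) : ℚ) * t^k
        = ∑ k ∈ range (N+1), (-1:ℚ)^(n+k) * ((n+k).choose (2*k) : ℚ) * t^k := by
      refine Finset.sum_subset (by apply Finset.range_subset_range.mpr; omega) ?_
      intro x hx hnx
      simp only [mem_range] at hx hnx
      rw [Nat.choose_eq_zero_of_lt (by omega)]
      ring
    rw [hext, ← Finset.sum_sub_distrib, Finset.mul_sum]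
    exact Finset.sum_congr rfl fun k _ => by ring
  ------------------------------------------------------------------
  -- cast of right-side terms
  ------------------------------------------------------------------
  have hRkey : ∀ k, k ≤ N →
      ((((-1:ℚ)^n * ((-1:ℚ)^(N+k) * ((N+k).choose (2*k) : ℚ)
            - (-1:ℚ)^(n+k) * ((n+k).choose (2*k) : ℚ)) / m * t^k : ℚ)) : ZMod p)
        = ((-1 : ZMod p)^n * ((-1 : ZMod p)^(N+k) * (((N+k).choose (2*k) : ℕ) : ZMod p)
            - (-1 : ZMod p)^(n+k) * (((n+k).choose (2*k) : ℕ) : ZMod p)) * ((t.num : ℤ) : ZMod p)^k)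
          / ((m : ZMod p) * ((t.den : ℕ) : ZMod p)^k)
      ∧ ((((-1:ℚ)^n * ((-1:ℚ)^(N+k) * ((N+k).choose (2*k) : ℚ)
            - (-1:ℚ)^(n+k) * ((n+k).choose (2*k) : ℚ)) / m * t^k).den : ZMod p)) ≠ 0 := by
    intro k hk
    have hbK : (((m:ℤ) * (t.den:ℤ)^k : ℤ) : ZMod p) ≠ 0 := by
      push_cast
      exact mul_ne_zero hmK (pow_ne_zero _ htK)
    have hxb : ((-1:ℚ)^n * ((-1:ℚ)^(N+k) * ((N+k).choose (2*k) : ℚ)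
            - (-1:ℚ)^(n+k) * ((n+k).choose (2*k) : ℚ)) / m * t^k)
          * (((m:ℤ) * (t.den:ℤ)^k : ℤ) : ℚ)
        = (((-1:ℤ)^n * ((-1:ℤ)^(N+k) * ((N+k).choose (2*k) : ℤ)
            - (-1:ℤ)^(n+k) * ((n+k).choose (2*k) : ℤ)) * t.num^k : ℤ) : ℚ) := by
      push_cast
      rw [show ((t.num:ℚ))^k = t^k * (t.den:ℚ)^k by rw [num_eq]; ring]
      field_simp
    have h := ratCast_num_den _ _ _ hbK hxb
    refine ⟨?_, h.2⟩
    rw [h.1]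
    push_cast
    ring_nf
  ------------------------------------------------------------------
  -- vanishing of right-side terms for k < (p+1)/2
  ------------------------------------------------------------------
  have hRzero : ∀ k, k ≤ N → k < (p+1)/2 →
      ((((-1:ℚ)^n * ((-1:ℚ)^(N+k) * ((N+k).choose (2*k) : ℚ)
            - (-1:ℚ)^(n+k) * ((n+k).choose (2*k) : ℚ)) / m * t^k : ℚ)) : ZMod p) = 0 := by
    intro k hk hk0
    rw [(hRkey k hk).1]
    have hnum : ((-1 : ZMod p)^(N+k) * (((N+k).choose (2*k) : ℕ) : ZMod p)
            - (-1 : ZMod p)^(n+k) * (((n+k).choose (2*k) : ℕ) : ZMod p)) = 0 := by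
      rcases le_or_gt k n with hkn | hkn
      · rw [hchoose1 k hkn, pow_add, pow_add, hpar]
        ring
      · rw [hchoose2 k hkn (by omega) hk,
          Nat.choose_eq_zero_of_lt (show n+k < 2*k by omega)]
        push_cast
        ring
    rw [hnum]
    simp
  ------------------------------------------------------------------
  -- key: choose value on the high range
  ------------------------------------------------------------------
  have hCN3 : ∀ k, (p+1)/2 ≤ k → k ≤ N →
      (((N+k).choose (2*k) : ℕ) : ZMod p) * (((2*k-p).factorial : ℕ) : ZMod p)
        = (-1 : ZMod p)^(n+k+1) * (((n+k).factorial : ℕ) : ZMod p) * (((k-n-1).factorial : ℕ) : ZMod p) := by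
    intro k hk1 hk2
    have hkn : n < k := by omega
    have h2k : p + 1 ≤ 2*k := by omega
    have hfacsplit : (2*k).factorial = p * ((p-1).factorial * (p+1).ascFactorial (2*k - p)) := by
      have h5 := Nat.factorial_mul_ascFactorial p (2*k - p)
      rw [show p + (2*k-p) = 2*k by omega] at h5
      have h6 : p.factorial = p * (p-1).factorial := by
        conv_lhs => rw [show p = (p-1)+1 by omega]
        rw [Nat.factorial_succ]
        congr 1
        omega
      rw [← h5, h6]
      ring
    have hA := choose_asc N k (by omega)
    have hsp1 : (N-k+1).ascFactorial (2*k)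
        = (N-k+1).ascFactorial (n+k) * p.ascFactorial (k-n) := by
      have h7 := asc_split (N-k+1) (n+k) (k-n)
      rw [show (n+k)+(k-n) = 2*k by omega, show N-k+1+(n+k) = p by omega] at h7
      exact h7
    have hsp3 : p.ascFactorial (k-n) = p * (p+1).ascFactorial (k-n-1) := by
      have h8 := asc_split p 1 (k-n-1)
      rw [show 1+(k-n-1) = k-n by omega] at h8
      rw [h8, show p.ascFactorial 1 = p by
        rw [Nat.ascFactorial_succ, Nat.ascFactorial_zero]; ring]
    have hcomb : ((N+k).choose (2*k)) * (p * ((p-1).factorial * (p+1).ascFactorial (2*k - p)))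
        = (N-k+1).ascFactorial (n+k) * (p * (p+1).ascFactorial (k-n-1)) := by
      rw [← hfacsplit, hA, hsp1, hsp3]
    have hcan : ((N+k).choose (2*k)) * ((p-1).factorial * (p+1).ascFactorial (2*k - p))
        = (N-k+1).ascFactorial (n+k) * (p+1).ascFactorial (k-n-1) := by
      refine Nat.eq_of_mul_eq_mul_left (show 0 < p by omega) ?_
      calc p * (((N+k).choose (2*k)) * ((p-1).factorial * (p+1).ascFactorial (2*k - p)))
          = ((N+k).choose (2*k)) * (p * ((p-1).factorial * (p+1).ascFactorial (2*k - p))) := by ring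
        _ = (N-k+1).ascFactorial (n+k) * (p * (p+1).ascFactorial (k-n-1)) := hcomb
        _ = p * ((N-k+1).ascFactorial (n+k) * (p+1).ascFactorial (k-n-1)) := by ring
    have hcast := congrArg (fun z : ℕ => (z : ZMod p)) hcan
    push_cast at hcast
    rw [ZMod.wilsons_lemma, cast_asc_p_succ, cast_asc_p_succ,
      show N-k+1 = p-(n+k) by omega] at hcast
    have h7 := cast_asc_p_sub p (n+k) (n+k) (by omega) (by omega)
    rw [show n+k+1-(n+k) = 1 by omega, Nat.one_ascFactorial] at h7
    rw [h7] at hcast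
    push_cast at hcast
    linear_combination -hcast
  ------------------------------------------------------------------
  -- cast of left-side terms
  ------------------------------------------------------------------
  have hLkey : ∀ k, (p+1)/2 ≤ k → k ≤ N →
      ((((ascPochhammer ℚ k).eval (1 / (m : ℚ)) * (ascPochhammer ℚ k).eval (((m : ℚ) - 1) / m)
          / (Nat.factorial (2 * k)) * t ^ k : ℚ)) : ZMod p)
        = ((-1 : ZMod p)^(n+1) * (((n+k).factorial : ℕ) : ZMod p) * (((k-n-1).factorial : ℕ) : ZMod p)
            * ((t.num : ℤ) : ZMod p)^k)
          / ((m : ZMod p) * (((2*k-p).factorial : ℕ) : ZMod p) * ((t.den : ℕ) : ZMod p)^k)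
      ∧ ((((ascPochhammer ℚ k).eval (1 / (m : ℚ)) * (ascPochhammer ℚ k).eval (((m : ℚ) - 1) / m)
          / (Nat.factorial (2 * k)) * t ^ k).den : ZMod p)) ≠ 0 := by
    intro k hk1 hk2
    have hkn : n < k := by omega
    have h2k : p + 1 ≤ 2*k := by omega
    have h2kp : 2*k - p < p := by omega
    -- pochhammer to integer products
    have hmkQ : (m:ℚ)^k = ∏ _j ∈ range k, (m:ℚ) := by
      rw [Finset.prod_const, card_range]
    have hu1 : (ascPochhammer ℚ k).eval (1/(m:ℚ)) * (m:ℚ)^k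
        = ((∏ j ∈ range k, (m*j+1) : ℕ) : ℚ) := by
      rw [poch_eval_prod, hmkQ, ← Finset.prod_mul_distrib]
      push_cast
      refine Finset.prod_congr rfl fun j _ => ?_
      field_simp
      ring
    have hu2 : (ascPochhammer ℚ k).eval (((m:ℚ)-1)/m) * (m:ℚ)^k
        = ((∏ j ∈ range k, (m*j+(m-1)) : ℕ) : ℚ) := by
      rw [poch_eval_prod, hmkQ, ← Finset.prod_mul_distrib]
      push_cast [Nat.cast_sub (show 1 ≤ m by omega)]
      refine Finset.prod_congr rfl fun j _ => ?_
      field_simp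
      ring
    obtain ⟨cs, co, hcs, hco, hprod⟩ : ∃ cs co : ℕ, m*n + cs = p
        ∧ ((co:ℕ) : ZMod p) = (m : ZMod p) * ((n : ZMod p)+1)
        ∧ (∏ j ∈ range k, (m*j+1)) * (∏ j ∈ range k, (m*j+(m-1)))
          = (∏ j ∈ range k, (m*j+cs)) * (∏ j ∈ range k, (m*j+co)) := by
      rcases h2 with rfl | hr2
      · refine ⟨1, m-1, by omega, ?_, rfl⟩
        have hc := congrArg (fun z : ℕ => (z : ZMod p)) h1
        push_cast [ZMod.natCast_self] at hc
        rw [Nat.cast_sub (show 1 ≤ m by omega)]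
        push_cast
        linear_combination -hc
      · refine ⟨m-1, 1, by omega, ?_, mul_comm _ _⟩
        have hc := congrArg (fun z : ℕ => (z : ZMod p)) h1
        rw [hr2] at hc
        push_cast [ZMod.natCast_self, Nat.cast_sub (show 1 ≤ m by omega)] at hc
        push_cast
        linear_combination -hc
    have hcsK : ((cs:ℕ) : ZMod p) = -((m : ZMod p) * (n : ZMod p)) := by
      have hc := congrArg (fun z : ℕ => (z : ZMod p)) hcs
      push_cast [ZMod.natCast_self] at hc
      linear_combination hc
    have hsplit : (∏ j ∈ range k, (m*j+cs))
        = p * ((∏ j ∈ range n, (m*j+cs)) * ∏ j ∈ Ico (n+1) k, (m*j+cs)) := by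
      rw [Finset.range_eq_Ico,
        ← Finset.prod_Ico_consecutive _ (Nat.zero_le (n+1)) (show n+1 ≤ k by omega),
        ← Finset.range_eq_Ico, Finset.prod_range_succ, hcs]
      ring
    have hpart1 : ((∏ j ∈ range n, (m*j+cs) : ℕ) : ZMod p)
        = (m : ZMod p)^n * (-1)^n * ((n.factorial : ℕ) : ZMod p) := by
      push_cast
      have hstep : ∀ j ∈ range n, (m : ZMod p)*(j : ZMod p) + (cs : ZMod p) = (m : ZMod p) * (-(n : ZMod p) + (j : ZMod p)) := by
        intro j _
        rw [hcsK]
        ring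
      rw [Finset.prod_congr rfl hstep, Finset.prod_mul_distrib, Finset.prod_const, card_range,
        prod_neg_shift n n (by omega), show n+1-n = 1 by omega, ← cast_asc_prod 1 n,
        Nat.one_ascFactorial]
      push_cast
      ring
    have hpart2 : ((∏ j ∈ Ico (n+1) k, (m*j+cs) : ℕ) : ZMod p)
        = (m : ZMod p)^(k-n-1) * (((k-n-1).factorial : ℕ) : ZMod p) := by
      push_cast
      rw [Finset.prod_Ico_eq_prod_range, show k - (n+1) = k-n-1 by omega]
      have hstep : ∀ j ∈ range (k-n-1),
          (m : ZMod p)*((n+1+j : ℕ) : ZMod p) + (cs : ZMod p) = (m : ZMod p) * (((1:ℕ) : ZMod p) + (j : ZMod p)) := by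
        intro j _
        rw [hcsK]
        push_cast
        ring
      rw [Finset.prod_congr rfl hstep, Finset.prod_mul_distrib, Finset.prod_const, card_range,
        ← cast_asc_prod 1 (k-n-1), Nat.one_ascFactorial]
    have hpartco : ((∏ j ∈ range k, (m*j+co) : ℕ) : ZMod p)
        = (m : ZMod p)^k * (((n+1).ascFactorial k : ℕ) : ZMod p) := by
      push_cast
      have hstep : ∀ j ∈ range k,
          (m : ZMod p)*(j : ZMod p) + (co : ZMod p) = (m : ZMod p) * (((n+1:ℕ) : ZMod p) + (j : ZMod p)) := by
        intro j _
        rw [hco]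
        push_cast
        ring
      rw [Finset.prod_congr rfl hstep, Finset.prod_mul_distrib, Finset.prod_const, card_range,
        ← cast_asc_prod (n+1) k]
    have hfacsplit : (2*k).factorial = p * ((p-1).factorial * (p+1).ascFactorial (2*k - p)) := by
      have h5 := Nat.factorial_mul_ascFactorial p (2*k - p)
      rw [show p + (2*k-p) = 2*k by omega] at h5
      have h6 : p.factorial = p * (p-1).factorial := by
        conv_lhs => rw [show p = (p-1)+1 by omega]
        rw [Nat.factorial_succ]
        congr 1
        omega
      rw [← h5, h6]
      ring
    set Fk := (p-1).factorial * (p+1).ascFactorial (2*k - p) with hFkdef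
    have hFkK : ((Fk : ℕ) : ZMod p) = -(((2*k-p).factorial : ℕ) : ZMod p) := by
      rw [hFkdef]
      push_cast
      rw [ZMod.wilsons_lemma, cast_asc_p_succ]
      ring
    have hFkne : ((Fk : ℕ) : ZMod p) ≠ 0 := by
      rw [hFkK]
      simpa using hfactK (2*k-p) (by omega)
    have hFk0 : (Fk:ℚ) ≠ 0 := by
      refine Nat.cast_ne_zero.mpr ?_
      intro h0
      rw [h0, mul_zero] at hfacsplit
      exact Nat.factorial_ne_zero _ hfacsplit
    set QQ := ((∏ j ∈ range n, (m*j+cs)) * ∏ j ∈ Ico (n+1) k, (m*j+cs))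
        * (∏ j ∈ range k, (m*j+co)) with hQQdef
    have hPQ : ((∏ j ∈ range k, (m*j+1) : ℕ) : ℚ) * ((∏ j ∈ range k, (m*j+(m-1)) : ℕ) : ℚ)
        = (p:ℚ) * (QQ:ℚ) := by
      rw [hQQdef]
      exact_mod_cast congrArg (fun z : ℕ => (z:ℚ)) (by rw [hprod, hsplit]; ring)
    have hfacQ : ((2*k).factorial : ℚ) = (p:ℚ) * (Fk:ℚ) := by
      exact_mod_cast congrArg (fun z : ℕ => (z:ℚ)) hfacsplit
    have hnumk : (t.num:ℚ)^k = t^k * (t.den:ℚ)^k := by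
      rw [num_eq]
      ring
    have hp0 : (p:ℚ) ≠ 0 := Nat.cast_ne_zero.mpr (by omega)
    have hxb : ((ascPochhammer ℚ k).eval (1 / (m : ℚ)) * (ascPochhammer ℚ k).eval (((m : ℚ) - 1) / m)
          / (Nat.factorial (2 * k)) * t ^ k)
          * (((m:ℤ)^(2*k) * (Fk:ℤ) * (t.den:ℤ)^k : ℤ) : ℚ)
        = (((QQ:ℤ) * t.num^k : ℤ) : ℚ) := by
      have hfQ : ((2*k).factorial : ℚ) ≠ 0 := Nat.cast_ne_zero.mpr (Nat.factorial_ne_zero _)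
      have step1 : ((ascPochhammer ℚ k).eval (1 / (m : ℚ))
            * (ascPochhammer ℚ k).eval (((m : ℚ) - 1) / m)
            / (Nat.factorial (2 * k)) * t ^ k)
            * (((m:ℤ)^(2*k) * (Fk:ℤ) * (t.den:ℤ)^k : ℤ) : ℚ)
          = (((ascPochhammer ℚ k).eval (1 / (m : ℚ)) * (m:ℚ)^k)
              * ((ascPochhammer ℚ k).eval (((m : ℚ) - 1) / m) * (m:ℚ)^k))
              * ((Fk:ℚ) * (t^k * (t.den:ℚ)^k)) / ((2*k).factorial : ℚ) := by
        push_cast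
        ring
      rw [step1, hu1, hu2, hPQ, hfacQ]
      rw [show (p:ℚ) * (QQ:ℚ) * ((Fk:ℚ) * (t^k * (t.den:ℚ)^k))
          = ((QQ:ℚ) * (t^k * (t.den:ℚ)^k)) * ((p:ℚ) * (Fk:ℚ)) by ring,
        mul_div_cancel_right₀ _ (mul_ne_zero hp0 hFk0)]
      push_cast
      rw [hnumk]
    have hbK : (((m:ℤ)^(2*k) * (Fk:ℤ) * (t.den:ℤ)^k : ℤ) : ZMod p) ≠ 0 := by
      push_cast
      exact mul_ne_zero (mul_ne_zero (pow_ne_zero _ hmK) hFkne) (pow_ne_zero _ htK)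
    have hcast := ratCast_num_den _ _ _ hbK hxb
    refine ⟨?_, hcast.2⟩
    rw [hcast.1]
    have hQQK : ((QQ:ℕ) : ZMod p) = ((m : ZMod p)^n * (-1)^n * ((n.factorial:ℕ) : ZMod p))
        * ((m : ZMod p)^(k-n-1) * (((k-n-1).factorial:ℕ) : ZMod p))
        * ((m : ZMod p)^k * (((n+1).ascFactorial k : ℕ) : ZMod p)) := by
      rw [hQQdef]
      push_cast
      rw [← hpart1, ← hpart2, ← hpartco]
      push_cast
      ring
    have hasc : ((n.factorial : ℕ) : ZMod p) * (((n+1).ascFactorial k : ℕ) : ZMod p)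
        = (((n+k).factorial : ℕ) : ZMod p) := by
      exact_mod_cast congrArg (fun z : ℕ => (z : ZMod p)) (Nat.factorial_mul_ascFactorial n k)
    have hmpow : (m : ZMod p)^n * ((m : ZMod p)^(k-n-1) * ((m : ZMod p)^k * (m : ZMod p))) = (m : ZMod p)^(2*k) := by
      rw [← pow_succ, ← pow_add, ← pow_add, show n+(k-n-1+(k+1)) = 2*k by omega]
    have hdV : (m : ZMod p) * (((2*k-p).factorial : ℕ) : ZMod p) * ((t.den : ℕ) : ZMod p)^k ≠ 0 :=
      mul_ne_zero (mul_ne_zero hmK (hfactK _ (by omega))) (pow_ne_zero _ htK)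
    have hbK' : ((m : ZMod p))^(2*k) * ((Fk:ℕ) : ZMod p) * ((t.den : ℕ) : ZMod p)^k ≠ 0 :=
      mul_ne_zero (mul_ne_zero (pow_ne_zero _ hmK) hFkne) (pow_ne_zero _ htK)
    push_cast
    rw [div_eq_div_iff hbK' hdV]
    rw [hQQK, hFkK]
    linear_combination ((-1 : ZMod p)^n * (m : ZMod p)^n * (m : ZMod p)^(k-n-1) * (m : ZMod p)^k * (m : ZMod p)
        * (((k-n-1).factorial:ℕ) : ZMod p) * ((t.num:ℤ) : ZMod p)^k * (((2*k-p).factorial:ℕ) : ZMod p)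
        * ((t.den:ℕ) : ZMod p)^k) * hasc
      + ((-1 : ZMod p)^n * (((n+k).factorial:ℕ) : ZMod p) * (((k-n-1).factorial:ℕ) : ZMod p)
        * ((t.num:ℤ) : ZMod p)^k * (((2*k-p).factorial:ℕ) : ZMod p) * ((t.den:ℕ) : ZMod p)^k) * hmpow
    ------------------------------------------------------------------
  -- right-side terms on the high range
  ------------------------------------------------------------------
  have hRmid : ∀ k, (p+1)/2 ≤ k → k ≤ N →
      ((((-1:ℚ)^n * ((-1:ℚ)^(N+k) * ((N+k).choose (2*k) : ℚ)
            - (-1:ℚ)^(n+k) * ((n+k).choose (2*k) : ℚ)) / m * t^k : ℚ)) : ZMod p)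
        = ((-1 : ZMod p)^(n+1) * (((n+k).factorial : ℕ) : ZMod p)
            * (((k-n-1).factorial : ℕ) : ZMod p) * ((t.num : ℤ) : ZMod p)^k)
          / ((m : ZMod p) * (((2*k-p).factorial : ℕ) : ZMod p) * ((t.den : ℕ) : ZMod p)^k) := by
    intro k hk1 hk2
    rw [(hRkey k hk2).1]
    rw [Nat.choose_eq_zero_of_lt (show n+k < 2*k by omega)]
    have h9 : (-1 : ZMod p)^(N+k) = (-1 : ZMod p)^(n+k) := by
      rw [pow_add, pow_add, hpar]
    rw [h9]
    have hdV : (m : ZMod p) * (((2*k-p).factorial : ℕ) : ZMod p) * ((t.den : ℕ) : ZMod p)^k ≠ 0 :=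
      mul_ne_zero (mul_ne_zero hmK (hfactK _ (by omega))) (pow_ne_zero _ htK)
    have hdR : (m : ZMod p) * ((t.den : ℕ) : ZMod p)^k ≠ 0 :=
      mul_ne_zero hmK (pow_ne_zero _ htK)
    rw [div_eq_div_iff hdR hdV]
    push_cast
    have hone : (-1 : ZMod p)^(2*n) = 1 := by
      rw [pow_mul]
      norm_num
    have hktwo : (-1 : ZMod p)^(2*k) = 1 := by
      rw [pow_mul]
      norm_num
    linear_combination ((-1 : ZMod p)^n * (-1 : ZMod p)^(n+k) * ((t.num : ℤ) : ZMod p)^k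
        * (m : ZMod p) * ((t.den : ℕ) : ZMod p)^k) * (hCN3 k hk1 hk2)
      - (((t.num : ℤ) : ZMod p)^k * (m : ZMod p) * ((t.den : ℕ) : ZMod p)^k
        * (((n+k).factorial : ℕ) : ZMod p) * (((k-n-1).factorial : ℕ) : ZMod p)
        * (-1 : ZMod p)^n) * hone
      - (((t.num : ℤ) : ZMod p)^k * (m : ZMod p) * ((t.den : ℕ) : ZMod p)^k
        * (((n+k).factorial : ℕ) : ZMod p) * (((k-n-1).factorial : ℕ) : ZMod p)
        * (-1 : ZMod p)^n * (-1 : ZMod p)^(2*n)) * hktwo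
  ------------------------------------------------------------------
  -- final assembly
  ------------------------------------------------------------------
  have hLsum := ratCast_sum (p := p) (Finset.Icc ((p+1)/2) N)
    (fun k => (ascPochhammer ℚ k).eval (1 / (m : ℚ)) * (ascPochhammer ℚ k).eval (((m : ℚ) - 1) / m)
          / (Nat.factorial (2 * k)) * t ^ k)
    (fun k hk => (hLkey k (Finset.mem_Icc.mp hk).1 (Finset.mem_Icc.mp hk).2).2)
  have hRsum := ratCast_sum (p := p) (range (N+1))
    (fun k => (-1:ℚ)^n * ((-1:ℚ)^(N+k) * ((N+k).choose (2*k) : ℚ)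
            - (-1:ℚ)^(n+k) * ((n+k).choose (2*k) : ℚ)) / m * t^k)
    (fun k hk => (hRkey k (by
      have := Finset.mem_range.mp hk
      omega)).2)
  rw [hRdef, hLsum.1, hRsum.1]
  have hsub1 : Finset.Icc ((p+1)/2) N ⊆ range (N+1) := by
    intro x hx
    simp only [Finset.mem_Icc, Finset.mem_range] at *
    omega
  have hvan : ∀ x ∈ range (N+1), x ∉ Finset.Icc ((p+1)/2) N →
      ((((-1:ℚ)^n * ((-1:ℚ)^(N+x) * ((N+x).choose (2*x) : ℚ)
            - (-1:ℚ)^(n+x) * ((n+x).choose (2*x) : ℚ)) / m * t^x : ℚ)) : ZMod p) = 0 := by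
    intro x hx hnx
    simp only [Finset.mem_Icc, Finset.mem_range] at hx hnx
    exact hRzero x (by omega) (by omega)
  rw [← Finset.sum_subset hsub1 hvan]
  refine Finset.sum_congr rfl fun k hk => ?_
  have hk' := Finset.mem_Icc.mp hk
  rw [(hLkey k hk'.1 hk'.2).1, hRmid k hk'.1 hk'.2]

end Stmt3Aux

theorem stmt3 (m : ℕ) (hm : m = 3 ∨ m = 4 ∨ m = 6) (p : ℕ) [Fact p.Prime] (hp : 3 < p)
    (t : ℚ) (ht : ¬ p ∣ t.den) :
    ((∑ k ∈ Finset.Icc ((p + 1) / 2) ((m - 1) * p / m),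
        (ascPochhammer ℚ k).eval (1 / (m : ℚ)) * (ascPochhammer ℚ k).eval (((m : ℚ) - 1) / m)
          / (Nat.factorial (2 * k)) * t ^ k : ℚ) : ZMod p)
      = (((-1 : ℚ) ^ (p / m) / (m : ℚ)
          * (w ((m - 1) * p / m) (t / 2 - 1) - w (p / m) (t / 2 - 1)) : ℚ) : ZMod p) := by
  have hP : p.Prime := Fact.out
  have hp5 : 5 ≤ p := by
    rcases (show p = 4 ∨ 5 ≤ p by omega) with rfl | h
    · exact absurd hP (by decide)
    · exact h
  have hp2 : p % 2 = 1 := Nat.odd_iff.mp (hP.odd_of_ne_two (by omega))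
  have hp3 : p % 3 ≠ 0 := by
    intro h
    have h3 : (3:ℕ) ∣ p := Nat.dvd_of_mod_eq_zero h
    rcases (Nat.Prime.eq_one_or_self_of_dvd hP 3 h3) with h | h <;> omega
  have h1 : m * (p / m) + p % m = p := Nat.div_add_mod p m
  have hpm : ¬ p ∣ m := by
    intro hdvd
    have hle : p ≤ m := Nat.le_of_dvd (by omega) hdvd
    rcases hm with rfl | rfl | rfl <;> interval_cases p <;> revert hdvd <;> first
      | (exact absurd hP (by decide)) | decide
  rcases hm with rfl | rfl | rfl
  · exact Stmt3Aux.main p 3 (p/3) (2*p/3) (p%3) hp5 (by omega) h1 (by omega) (by omega) hpm t ht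
  · exact Stmt3Aux.main p 4 (p/4) (3*p/4) (p%4) hp5 (by omega) h1 (by omega) (by omega) hpm t ht
  · exact Stmt3Aux.main p 6 (p/6) (5*p/6) (p%6) hp5 (by omega) h1 (by omega) (by omega) hpm t ht
end

section
/- Let p be a prime with p > 3 and let x ∈ D_p. Then: (i) w_{⌊p/4⌋}(2x² − 1) ≡ (1/2)·(−2/p) · ( ((1−x)/p) + ((1+x)/p) ) (mod p); (ii) w_{⌊3p/4⌋}(2x² − 1) ≡ (1/2)·(−2/p) · ( ((1−x)/p)·(1 + 2x) + ((1+x)/p)·(1 − 2x) ) (mod p). -/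
/-- The Legendre symbol extended to rationals `c = a/b` in lowest terms by `(c/p) := (ab/p)`. -/
def legQ (p : ℕ) [Fact p.Prime] (c : ℚ) : ℤ := legendreSym p (c.num * c.den)

open Polynomial AdjoinRoot

/-- The pair of auxiliary polynomial sequences. -/
def PQ {R : Type*} [CommRing R] : ℕ → R → R × R
  | 0, _ => (1, 1)
  | n + 1, x => (x * (PQ n x).1 + (x - 1) * (PQ n x).2,
      (x + 1) * (PQ n x).1 + x * (PQ n x).2)

lemma w_PQ {R : Type*} [CommRing R] (x : R) (n : ℕ) :
    w n (2 * x ^ 2 - 1) = (PQ n x).1 * (PQ n x).2 := by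
  suffices H : ∀ m : ℕ, w m (2 * x ^ 2 - 1) = (PQ m x).1 * (PQ m x).2 ∧
      w (m + 1) (2 * x ^ 2 - 1) = (PQ (m + 1) x).1 * (PQ (m + 1) x).2 from (H n).1
  intro m
  induction m with
  | zero =>
      constructor
      · show (1 : R) = 1 * 1; ring
      · show 1 + 2 * (2 * x ^ 2 - 1) =
          (x * 1 + (x - 1) * 1) * ((x + 1) * 1 + x * 1)
        ring
  | succ n ih =>
      obtain ⟨h1, h2⟩ := ih
      refine ⟨h2, ?_⟩
      have hw : w (n + 2) (2 * x ^ 2 - 1) =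
          2 * (2 * x ^ 2 - 1) * w (n + 1) (2 * x ^ 2 - 1) - w n (2 * x ^ 2 - 1) := rfl
      have e1 : (PQ (n + 1) x).1 = x * (PQ n x).1 + (x - 1) * (PQ n x).2 := rfl
      have e2 : (PQ (n + 1) x).2 = (x + 1) * (PQ n x).1 + x * (PQ n x).2 := rfl
      have e3 : (PQ (n + 2) x).1 = x * (PQ (n + 1) x).1 + (x - 1) * (PQ (n + 1) x).2 := rfl
      have e4 : (PQ (n + 2) x).2 = (x + 1) * (PQ (n + 1) x).1 + x * (PQ (n + 1) x).2 := rfl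
      rw [hw, h1, h2, e3, e4, e1, e2]
      ring

section Quad

variable {R : Type*} [CommRing R]

lemma quad_root_sq (c : R) : (root (X ^ 2 - C c)) ^ 2 = of _ c := by
  have h := mk_self (f := (X ^ 2 - C c))
  rw [map_sub, map_pow, mk_X, mk_C] at h
  rw [sub_eq_zero] at h
  exact h

lemma quad_indep [Nontrivial R] (c s t : R)
    (h : of (X ^ 2 - C c) s + of (X ^ 2 - C c) t * root (X ^ 2 - C c) = 0) :
    s = 0 ∧ t = 0 := by
  have hm : (X ^ 2 - C c : R[X]).Monic := monic_X_pow_sub_C c two_ne_zero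
  have hmk : mk (X ^ 2 - C c) (C t * X + C s) = 0 := by
    rw [map_add, map_mul, mk_X, mk_C, mk_C]
    linear_combination h
  have hdvd : (X ^ 2 - C c) ∣ (C t * X + C s) := mk_eq_zero.mp hmk
  have hz : (C t * X + C s : R[X]) = 0 := by
    have hlt : (C t * X + C s : R[X]).degree < (X ^ 2 - C c : R[X]).degree := by
      rw [degree_X_pow_sub_C (by norm_num) c]
      exact lt_of_le_of_lt degree_linear_le (by norm_num)
    have h1 : (C t * X + C s) %ₘ (X ^ 2 - C c) = C t * X + C s :=
      (modByMonic_eq_self_iff hm).mpr hlt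
    have h2 : (C t * X + C s) %ₘ (X ^ 2 - C c) = 0 :=
      (modByMonic_eq_zero_iff_dvd hm).mpr hdvd
    rw [h1] at h2
    exact h2
  constructor
  · have := congrArg (fun q : R[X] => q.coeff 0) hz
    simpa using this
  · have := congrArg (fun q : R[X] => q.coeff 1) hz
    simpa using this

end Quad

/-- Construction of the rank-4 extension of `ZMod p` containing square roots of `α` and `β`. -/
lemma exists_S (p : ℕ) [Fact p.Prime] (α β : ZMod p) :
    ∃ (S : Type) (_ : CommRing S) (_ : CharP S p) (φ : ZMod p →+* S) (a b : S),
      a ^ 2 = φ α ∧ b ^ 2 = φ β ∧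
      ∀ u v u' v' : ZMod p,
        φ u + φ v * (a * b) = φ u' + φ v' * (a * b) → u = u' ∧ v = v' := by
  classical
  set g₁ : (ZMod p)[X] := X ^ 2 - C α with hg₁
  have inj₁ : Function.Injective (of g₁) := by
    intro s t hst
    have h0 : of g₁ (s - t) + of g₁ 0 * root g₁ = 0 := by
      rw [map_sub, map_zero, zero_mul, add_zero, sub_eq_zero]; exact hst
    have := (quad_indep α (s - t) 0 h0).1
    exact sub_eq_zero.mp this
  haveI : Nontrivial (AdjoinRoot g₁) :=
    ⟨of g₁ 0, of g₁ 1, fun h => zero_ne_one (inj₁ h)⟩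
  set g₂ : (AdjoinRoot g₁)[X] := X ^ 2 - C (of g₁ β) with hg₂
  set S := AdjoinRoot g₂ with hS
  have inj₂ : Function.Injective (of g₂) := by
    intro s t hst
    have h0 : of g₂ (s - t) + of g₂ 0 * root g₂ = 0 := by
      rw [map_sub, map_zero, zero_mul, add_zero, sub_eq_zero]; exact hst
    have := (quad_indep (of g₁ β) (s - t) 0 h0).1
    exact sub_eq_zero.mp this
  set φ : ZMod p →+* S := (of g₂).comp (of g₁) with hφ
  have injφ : Function.Injective φ := inj₂.comp inj₁
  haveI : CharP S p := charP_of_injective_ringHom injφ p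
  refine ⟨S, inferInstance, inferInstance, φ, of g₂ (root g₁), root g₂, ?_, ?_, ?_⟩
  · rw [← map_pow, quad_root_sq]; rfl
  · exact quad_root_sq (of g₁ β)
  · intro u v u' v' h
    have h0 : of g₂ (of g₁ (u - u')) + of g₂ (of g₁ (v - v') * root g₁) * root g₂ = 0 := by
      rw [map_mul]
      have : φ (u - u') + φ (v - v') * (of g₂ (root g₁) * root g₂) = 0 := by
        rw [map_sub, map_sub]
        linear_combination h
      rw [hφ] at this
      simp only [RingHom.comp_apply] at this
      linear_combination this
    obtain ⟨hA, hB⟩ := quad_indep (of g₁ β) _ _ h0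
    constructor
    · have := inj₁ (by rw [hA, map_zero] : of g₁ (u - u') = of g₁ 0)
      exact sub_eq_zero.mp this
    · have h1 : of g₁ 0 + of g₁ (v - v') * root g₁ = 0 := by
        rw [map_zero, zero_add]; exact hB
      have := (quad_indep α 0 (v - v') h1).2
      exact sub_eq_zero.mp this

/-- The key Frobenius computation, in an abstract quadratic-squared extension. -/
lemma key {p : ℕ} [Fact p.Prime] (hp : 2 * (p / 2) + 1 = p)
    {S : Type} [CommRing S] [CharP S p] (φ : ZMod p →+* S)
    (α : ZMod p)
    (a b : S) (ha : a ^ 2 = φ α) (hb : b ^ 2 = φ (α - 1))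
    (ext : ∀ u v u' v' : ZMod p,
      φ u + φ v * (a * b) = φ u' + φ v' * (a * b) → u = u' ∧ v = v')
    (k : ℕ) :
    (4 * k + 2 = p + 1 →
      2 * ((PQ k (α + (α - 1))).1 * (PQ k (α + (α - 1))).2)
        = α ^ (p / 2) + (α - 1) ^ (p / 2)) ∧
    (4 * k + 4 = p + 1 →
      2 * ((PQ k (α + (α - 1))).1 * (PQ k (α + (α - 1))).2)
        = (α - 1) ^ (p / 2) - α ^ (p / 2)) ∧
    (4 * k + 2 = 3 * p + 1 →
      2 * ((PQ k (α + (α - 1))).1 * (PQ k (α + (α - 1))).2)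
        = (α + 3 * (α - 1)) * α ^ (p / 2) + (3 * α + (α - 1)) * (α - 1) ^ (p / 2)) ∧
    (4 * k + 4 = 3 * p + 1 →
      2 * ((PQ k (α + (α - 1))).1 * (PQ k (α + (α - 1))).2)
        = (3 * α + (α - 1)) * (α - 1) ^ (p / 2) - (α + 3 * (α - 1)) * α ^ (p / 2)) := by
  set X : ZMod p := α + (α - 1) with hX
  set χp : ZMod p := α ^ (p / 2) with hχp
  set χm : ZMod p := (α - 1) ^ (p / 2) with hχm
  have hb' : b ^ 2 = φ α - 1 := by rw [hb, map_sub, map_one]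
  -- the basic odd-power expansion
  have hab : ∀ j : ℕ, (a + b) ^ (2 * j + 1)
      = φ (PQ j X).1 * a + φ (PQ j X).2 * b := by
    intro j
    induction j with
    | zero => simp [PQ]
    | succ n ih =>
        have hexp : 2 * (n + 1) + 1 = (2 * n + 1) + 2 := by ring
        rw [hexp, pow_add, ih]
        have e1 : (PQ (n + 1) X).1 = X * (PQ n X).1 + (X - 1) * (PQ n X).2 := rfl
        have e2 : (PQ (n + 1) X).2 = (X + 1) * (PQ n X).1 + X * (PQ n X).2 := rfl
        rw [e1, e2, hX]
        simp only [map_add, map_mul, map_sub, map_one]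
        linear_combination (φ (PQ n X).1 * a + 2 * φ (PQ n X).1 * b + φ (PQ n X).2 * b) * ha
          + (φ (PQ n X).1 * a + 2 * φ (PQ n X).2 * a + φ (PQ n X).2 * b) * hb'
  -- Frobenius
  have fr : (a + b) ^ p = φ χp * a + φ χm * b := by
    have h1 : (a + b) ^ p = a ^ p + b ^ p := add_pow_char ..
    have h2 : a ^ p = φ χp * a := by
      conv_lhs => rw [← hp]
      rw [pow_succ, pow_mul, ha, ← map_pow]
    have h3 : b ^ p = φ χm * b := by
      conv_lhs => rw [← hp]
      rw [pow_succ, pow_mul, hb, ← map_pow]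
    rw [h1, h2, h3]
  set P : ZMod p := (PQ k X).1 with hP
  set Q : ZMod p := (PQ k X).2 with hQ
  -- the square expansion
  have hsq : (a + b) ^ (4 * k + 2)
      = φ (α * P ^ 2 + (α - 1) * Q ^ 2) + φ (2 * (P * Q)) * (a * b) := by
    have h4 : 4 * k + 2 = (2 * k + 1) * 2 := by ring
    rw [h4, pow_mul, hab k]
    simp only [map_add, map_mul, map_sub, map_one, map_ofNat, map_pow]
    linear_combination (φ P) ^ 2 * ha + (φ Q) ^ 2 * hb'
  -- multiplication helpers
  have mulab : ∀ u v : ZMod p, (φ u * a + φ v * b) * (a + b)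
      = φ (α * u + (α - 1) * v) + φ (u + v) * (a * b) := by
    intro u v
    simp only [map_add, map_mul, map_sub, map_one]
    linear_combination (φ u) * ha + (φ v) * hb'
  have mulJ : ∀ u v : ZMod p, (φ u + φ v * (a * b)) * (a + b) ^ 2
      = φ (u * X + 2 * v * α * (α - 1)) + φ (2 * u + v * X) * (a * b) := by
    intro u v
    rw [hX]
    simp only [map_add, map_mul, map_sub, map_one, map_ofNat]
    linear_combination (φ u + φ v * (a * b) + 2 * φ v * b ^ 2) * ha
      + (φ u + φ v * (a * b) + 2 * φ v * (φ α)) * hb'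
  -- the Frobenius cube
  set A3 : ZMod p := χp * (α * χp ^ 2 + 3 * (α - 1) * χm ^ 2) with hA3
  set B3 : ZMod p := χm * (3 * α * χp ^ 2 + (α - 1) * χm ^ 2) with hB3
  have cube : ((a + b) ^ p) ^ 3 = φ A3 * a + φ B3 * b := by
    rw [fr, hA3, hB3]
    simp only [map_add, map_mul, map_sub, map_one, map_ofNat, map_pow]
    linear_combination ((φ χp) ^ 3 * a + 3 * (φ χp) ^ 2 * (φ χm) * b) * ha
      + (3 * (φ χp) * (φ χm) ^ 2 * a + (φ χm) ^ 3 * b) * hb'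
  -- reduction identities
  have hredp : α * χp ^ 2 = α := by
    have h5 : α * χp ^ 2 = α ^ (2 * (p / 2) + 1) := by
      rw [hχp, ← pow_mul, mul_comm (p / 2) 2, pow_succ']
    rw [h5, hp]
    exact ZMod.pow_card α
  have hredm : (α - 1) * χm ^ 2 = α - 1 := by
    have h5 : (α - 1) * χm ^ 2 = (α - 1) ^ (2 * (p / 2) + 1) := by
      rw [hχm, ← pow_mul, mul_comm (p / 2) 2, pow_succ']
    rw [h5, hp]
    exact ZMod.pow_card (α - 1)
  refine ⟨?_, ?_, ?_, ?_⟩ <;> intro hcase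
  · -- 4k+2 = p+1
    have E : φ (α * P ^ 2 + (α - 1) * Q ^ 2) + φ (2 * (P * Q)) * (a * b)
        = φ (α * χp + (α - 1) * χm) + φ (χp + χm) * (a * b) := by
      rw [← hsq, hcase, pow_succ, fr]
      exact mulab χp χm
    exact (ext _ _ _ _ E).2
  · -- 4k+4 = p+1
    have E : φ ((α * P ^ 2 + (α - 1) * Q ^ 2) * X + 2 * (2 * (P * Q)) * α * (α - 1))
        + φ (2 * (α * P ^ 2 + (α - 1) * Q ^ 2) + 2 * (P * Q) * X) * (a * b)
        = φ (α * χp + (α - 1) * χm) + φ (χp + χm) * (a * b) := by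
      calc φ ((α * P ^ 2 + (α - 1) * Q ^ 2) * X + 2 * (2 * (P * Q)) * α * (α - 1))
            + φ (2 * (α * P ^ 2 + (α - 1) * Q ^ 2) + 2 * (P * Q) * X) * (a * b)
          = (φ (α * P ^ 2 + (α - 1) * Q ^ 2) + φ (2 * (P * Q)) * (a * b)) * (a + b) ^ 2 :=
            (mulJ _ _).symm
        _ = (a + b) ^ (4 * k + 2) * (a + b) ^ 2 := by rw [hsq]
        _ = (a + b) ^ (p + 1) := by rw [← pow_add, show 4 * k + 2 + 2 = p + 1 by omega]
        _ = ((a + b) ^ p) * (a + b) := by rw [pow_succ]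
        _ = (φ χp * a + φ χm * b) * (a + b) := by rw [fr]
        _ = _ := mulab χp χm
    obtain ⟨e1, e2⟩ := ext _ _ _ _ E
    rw [hX] at e1 e2
    linear_combination (α + (α - 1)) * e2 - 2 * e1
  · -- 4k+2 = 3p+1
    have E : φ (α * P ^ 2 + (α - 1) * Q ^ 2) + φ (2 * (P * Q)) * (a * b)
        = φ (α * A3 + (α - 1) * B3) + φ (A3 + B3) * (a * b) := by
      calc φ (α * P ^ 2 + (α - 1) * Q ^ 2) + φ (2 * (P * Q)) * (a * b)
          = (a + b) ^ (4 * k + 2) := hsq.symm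
        _ = (a + b) ^ (3 * p + 1) := by rw [hcase]
        _ = ((a + b) ^ p) ^ 3 * (a + b) := by
            rw [show 3 * p + 1 = p * 3 + 1 by ring, pow_succ, pow_mul]
        _ = (φ A3 * a + φ B3 * b) * (a + b) := by rw [cube]
        _ = _ := mulab A3 B3
    have e2 := (ext _ _ _ _ E).2
    rw [hA3, hB3] at e2
    linear_combination e2 + (χp + 3 * χm) * hredp + (3 * χp + χm) * hredm
  · -- 4k+4 = 3p+1
    have E : φ ((α * P ^ 2 + (α - 1) * Q ^ 2) * X + 2 * (2 * (P * Q)) * α * (α - 1))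
        + φ (2 * (α * P ^ 2 + (α - 1) * Q ^ 2) + 2 * (P * Q) * X) * (a * b)
        = φ (α * A3 + (α - 1) * B3) + φ (A3 + B3) * (a * b) := by
      calc φ ((α * P ^ 2 + (α - 1) * Q ^ 2) * X + 2 * (2 * (P * Q)) * α * (α - 1))
            + φ (2 * (α * P ^ 2 + (α - 1) * Q ^ 2) + 2 * (P * Q) * X) * (a * b)
          = (φ (α * P ^ 2 + (α - 1) * Q ^ 2) + φ (2 * (P * Q)) * (a * b)) * (a + b) ^ 2 :=
            (mulJ _ _).symm
        _ = (a + b) ^ (4 * k + 2) * (a + b) ^ 2 := by rw [hsq]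
        _ = (a + b) ^ (3 * p + 1) := by rw [← pow_add, show 4 * k + 2 + 2 = 3 * p + 1 by omega]
        _ = ((a + b) ^ p) ^ 3 * (a + b) := by
            rw [show 3 * p + 1 = p * 3 + 1 by ring, pow_succ, pow_mul]
        _ = (φ A3 * a + φ B3 * b) * (a + b) := by rw [cube]
        _ = _ := mulab A3 B3
    obtain ⟨e1, e2⟩ := ext _ _ _ _ E
    rw [hX] at e1 e2
    rw [hA3, hB3] at e1 e2
    linear_combination (α + (α - 1)) * e2 - 2 * e1
      + (3 * χm - χp) * hredp + (χm - 3 * χp) * hredm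

section Casts

variable {p : ℕ} [Fact p.Prime]

lemma den_ne {q : ℚ} (hq : ¬ p ∣ q.den) : ((q.den : ZMod p)) ≠ 0 := by
  rw [Ne, ZMod.natCast_eq_zero_iff]; exact hq

lemma good_add {q r : ℚ} (hq : ¬ p ∣ q.den) (hr : ¬ p ∣ r.den) : ¬ p ∣ (q + r).den := by
  intro h
  rcases (Nat.Prime.dvd_mul (Fact.out)).mp (h.trans (Rat.add_den_dvd q r)) with h' | h'
  exacts [hq h', hr h']

lemma good_mul {q r : ℚ} (hq : ¬ p ∣ q.den) (hr : ¬ p ∣ r.den) : ¬ p ∣ (q * r).den := by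
  intro h
  rcases (Nat.Prime.dvd_mul (Fact.out)).mp (h.trans (Rat.mul_den_dvd q r)) with h' | h'
  exacts [hq h', hr h']

lemma good_sub {q r : ℚ} (hq : ¬ p ∣ q.den) (hr : ¬ p ∣ r.den) : ¬ p ∣ (q - r).den := by
  rw [sub_eq_add_neg]
  exact good_add hq (by rwa [Rat.neg_den])

lemma good_int (n : ℤ) : ¬ p ∣ ((n : ℚ)).den := by
  rw [Rat.den_intCast, Nat.dvd_one]
  exact (Fact.out (p := p.Prime)).one_lt.ne'

lemma good_one : ¬ p ∣ ((1 : ℚ)).den := by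
  have := good_int (p := p) 1
  simpa using this

lemma good_two : ¬ p ∣ ((2 : ℚ)).den := by
  have := good_int (p := p) 2
  simpa using this

lemma legQ_cast (hodd : p % 2 = 1) {c : ℚ} (hc : ¬ p ∣ c.den) :
    ((legQ p c : ℤ) : ZMod p) = ((c : ZMod p)) ^ (p / 2) := by
  have hden : ((c.den : ZMod p)) ≠ 0 := den_ne hc
  rw [legQ, legendreSym.eq_pow]
  push_cast
  rw [Rat.cast_def, div_pow, eq_div_iff (pow_ne_zero _ hden), mul_pow]
  have hd : (c.den : ZMod p) ^ (p / 2) * (c.den : ZMod p) ^ (p / 2) = 1 := by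
    rw [← pow_add, show p / 2 + p / 2 = p - 1 by omega]
    exact ZMod.pow_card_sub_one_eq_one hden
  linear_combination ((c.num : ZMod p) ^ (p / 2)) * hd

lemma w_cast {c : ℚ} (hc : ¬ p ∣ c.den) (n : ℕ) :
    ¬ p ∣ (w n c).den ∧ ((w n c : ℚ) : ZMod p) = w n ((c : ZMod p)) := by
  suffices H : ∀ m : ℕ,
      (¬ p ∣ (w m c).den ∧ ((w m c : ℚ) : ZMod p) = w m ((c : ZMod p))) ∧
      (¬ p ∣ (w (m + 1) c).den ∧ ((w (m + 1) c : ℚ) : ZMod p) = w (m + 1) ((c : ZMod p)))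
    from (H n).1
  intro m
  induction m with
  | zero =>
      refine ⟨⟨?_, ?_⟩, ?_, ?_⟩
      · show ¬ p ∣ (1 : ℚ).den; exact good_one
      · show ((1 : ℚ) : ZMod p) = (1 : ZMod p); exact Rat.cast_one
      · show ¬ p ∣ (1 + 2 * c).den
        exact good_add good_one (good_mul good_two hc)
      · show ((1 + 2 * c : ℚ) : ZMod p) = 1 + 2 * ((c : ZMod p))
        rw [Rat.cast_add_of_ne_zero (den_ne good_one) (den_ne (good_mul good_two hc)),
          Rat.cast_mul_of_ne_zero (den_ne good_two) (den_ne hc), Rat.cast_one, Rat.cast_ofNat]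
  | succ m ih =>
      obtain ⟨h1, h2⟩ := ih
      refine ⟨h2, ?_, ?_⟩
      · show ¬ p ∣ (2 * c * w (m + 1) c - w m c).den
        exact good_sub (good_mul (good_mul good_two hc) h2.1) h1.1
      · show ((2 * c * w (m + 1) c - w m c : ℚ) : ZMod p)
          = 2 * (c : ZMod p) * w (m + 1) ((c : ZMod p)) - w m ((c : ZMod p))
        rw [Rat.cast_sub_of_ne_zero (den_ne (good_mul (good_mul good_two hc) h2.1))
            (den_ne h1.1),
          Rat.cast_mul_of_ne_zero (den_ne (good_mul good_two hc)) (den_ne h2.1),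
          Rat.cast_mul_of_ne_zero (den_ne good_two) (den_ne hc),
          Rat.cast_ofNat, h1.2, h2.2]

end Casts

theorem stmt8 (p : ℕ) [Fact p.Prime] (hp : 3 < p) (x : ℚ) (hx : ¬ p ∣ x.den) :
    (((w (p / 4) (2 * x ^ 2 - 1) : ℚ) : ZMod p)
      = ((1 / 2 * (legendreSym p (-2) : ℚ)
          * ((legQ p (1 - x) : ℚ) + (legQ p (1 + x) : ℚ)) : ℚ) : ZMod p))
    ∧
    (((w (3 * p / 4) (2 * x ^ 2 - 1) : ℚ) : ZMod p)
      = ((1 / 2 * (legendreSym p (-2) : ℚ)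
          * ((legQ p (1 - x) : ℚ) * (1 + 2 * x)
              + (legQ p (1 + x) : ℚ) * (1 - 2 * x)) : ℚ) : ZMod p)) := by
  have hprime : p.Prime := Fact.out
  have hodd : p % 2 = 1 := by
    rcases hprime.eq_two_or_odd with h | h
    · omega
    · exact h
  have hp2 : 2 * (p / 2) + 1 = p := by omega
  have two_ne : (2 : ZMod p) ≠ 0 := by
    have h2' : ((2 : ℕ) : ZMod p) ≠ 0 := by
      rw [Ne, ZMod.natCast_eq_zero_iff]
      intro h; have := Nat.le_of_dvd (by norm_num) h; omega
    simpa using h2'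
  set X : ZMod p := ((x : ℚ) : ZMod p) with hXdef
  set i2 : ZMod p := (2 : ZMod p)⁻¹ with hi2def
  have h2 : (2 : ZMod p) * i2 = 1 := mul_inv_cancel₀ two_ne
  set α : ZMod p := (1 + X) * i2 with hαdef
  have hβ : α - 1 = (X - 1) * i2 := by rw [hαdef]; linear_combination h2
  have hXαβ : α + (α - 1) = X := by rw [hαdef]; linear_combination (1 + X) * h2
  obtain ⟨S, iS, cS, φ, a, b, ha, hb, ext⟩ := exists_S p α (α - 1)
  letI : CommRing S := iS
  letI : CharP S p := cS
  -- power facts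
  have ht2 : (2 : ZMod p) ^ (p / 2) * (2 : ZMod p) ^ (p / 2) = 1 := by
    rw [← pow_add, show p / 2 + p / 2 = p - 1 by omega]
    exact ZMod.pow_card_sub_one_eq_one two_ne
  have hti : (2 : ZMod p) ^ (p / 2) * i2 ^ (p / 2) = 1 := by
    rw [← mul_pow, h2, one_pow]
  have hi2t : i2 ^ (p / 2) = (2 : ZMod p) ^ (p / 2) := by
    calc i2 ^ (p / 2)
        = ((2 : ZMod p) ^ (p / 2) * (2 : ZMod p) ^ (p / 2)) * i2 ^ (p / 2) := by
          rw [ht2, one_mul]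
      _ = (2 : ZMod p) ^ (p / 2) * ((2 : ZMod p) ^ (p / 2) * i2 ^ (p / 2)) := by ring
      _ = (2 : ZMod p) ^ (p / 2) := by rw [hti, mul_one]
  have hχp : α ^ (p / 2) = (1 + X) ^ (p / 2) * (2 : ZMod p) ^ (p / 2) := by
    rw [hαdef, mul_pow, hi2t]
  have hχm : (α - 1) ^ (p / 2)
      = (-1 : ZMod p) ^ (p / 2) * ((1 - X) ^ (p / 2) * (2 : ZMod p) ^ (p / 2)) := by
    have h6 : α - 1 = (-1) * ((1 - X) * i2) := by rw [hβ]; ring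
    rw [h6, mul_pow, mul_pow, hi2t]
  have hδ : (-2 : ZMod p) ^ (p / 2) = (-1 : ZMod p) ^ (p / 2) * (2 : ZMod p) ^ (p / 2) := by
    rw [show (-2 : ZMod p) = (-1) * 2 by ring, mul_pow]
  have hca : 3 * α + (α - 1) = 2 * X + 1 := by
    rw [hαdef]; linear_combination 2 * (1 + X) * h2
  have hcb : α + 3 * (α - 1) = 2 * X - 1 := by
    rw [hαdef]; linear_combination 2 * (1 + X) * h2
  -- cast facts
  have hgx2 : ¬ p ∣ (2 * x ^ 2 - 1 : ℚ).den := by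
    rw [show (2 * x ^ 2 - 1 : ℚ) = 2 * (x * x) - 1 by ring]
    exact good_sub (good_mul good_two (good_mul hx hx)) good_one
  have hC : ((2 * x ^ 2 - 1 : ℚ) : ZMod p) = 2 * X ^ 2 - 1 := by
    rw [show (2 * x ^ 2 - 1 : ℚ) = 2 * (x * x) - 1 by ring,
      Rat.cast_sub_of_ne_zero (den_ne (good_mul good_two (good_mul hx hx))) (den_ne good_one),
      Rat.cast_mul_of_ne_zero (den_ne good_two) (den_ne (good_mul hx hx)),
      Rat.cast_mul_of_ne_zero (den_ne hx) (den_ne hx), Rat.cast_ofNat, Rat.cast_one]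
    ring
  have hg1m : ¬ p ∣ (1 - x : ℚ).den := good_sub good_one hx
  have hg1p : ¬ p ∣ (1 + x : ℚ).den := good_add good_one hx
  have hc1m : ((1 - x : ℚ) : ZMod p) = 1 - X := by
    rw [Rat.cast_sub_of_ne_zero (den_ne good_one) (den_ne hx), Rat.cast_one]
  have hc1p : ((1 + x : ℚ) : ZMod p) = 1 + X := by
    rw [Rat.cast_add_of_ne_zero (den_ne good_one) (den_ne hx), Rat.cast_one]
  have hlm : ((legQ p (1 - x) : ℤ) : ZMod p) = (1 - X) ^ (p / 2) := by
    rw [legQ_cast hodd hg1m, hc1m]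
  have hlp : ((legQ p (1 + x) : ℤ) : ZMod p) = (1 + X) ^ (p / 2) := by
    rw [legQ_cast hodd hg1p, hc1p]
  have hleg : ((legendreSym p (-2) : ℤ) : ZMod p) = (-2 : ZMod p) ^ (p / 2) := by
    rw [legendreSym.eq_pow]; push_cast; ring
  have hhalf : ((1 / 2 : ℚ) : ZMod p) = i2 := by
    rw [Rat.cast_def]; norm_num; rfl
  have hghalf : ¬ p ∣ (1 / 2 : ℚ).den := by
    rw [show (1 / 2 : ℚ).den = 2 by norm_num]
    intro h; have := Nat.le_of_dvd (by norm_num) h; omega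
  have hg12p : ¬ p ∣ (1 + 2 * x : ℚ).den := good_add good_one (good_mul good_two hx)
  have hg12m : ¬ p ∣ (1 - 2 * x : ℚ).den := good_sub good_one (good_mul good_two hx)
  have hc12p : ((1 + 2 * x : ℚ) : ZMod p) = 1 + 2 * X := by
    rw [Rat.cast_add_of_ne_zero (den_ne good_one) (den_ne (good_mul good_two hx)),
      Rat.cast_mul_of_ne_zero (den_ne good_two) (den_ne hx), Rat.cast_one, Rat.cast_ofNat]
  have hc12m : ((1 - 2 * x : ℚ) : ZMod p) = 1 - 2 * X := by
    rw [Rat.cast_sub_of_ne_zero (den_ne good_one) (den_ne (good_mul good_two hx)),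
      Rat.cast_mul_of_ne_zero (den_ne good_two) (den_ne hx), Rat.cast_one, Rat.cast_ofNat]
  have hgA : ¬ p ∣ ((legendreSym p (-2) : ℚ)).den := good_int _
  -- the two RHS casts
  have hRHS1 : ((1 / 2 * (legendreSym p (-2) : ℚ)
      * ((legQ p (1 - x) : ℚ) + (legQ p (1 + x) : ℚ)) : ℚ) : ZMod p)
      = i2 * ((-2 : ZMod p) ^ (p / 2))
        * ((1 - X) ^ (p / 2) + (1 + X) ^ (p / 2)) := by
    rw [Rat.cast_mul_of_ne_zero (den_ne (good_mul hghalf hgA))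
        (den_ne (good_add (good_int _) (good_int _))),
      Rat.cast_mul_of_ne_zero (den_ne hghalf) (den_ne hgA),
      Rat.cast_add_of_ne_zero (den_ne (good_int _)) (den_ne (good_int _)),
      hhalf, Rat.cast_intCast, Rat.cast_intCast, Rat.cast_intCast, hleg, hlm, hlp]
  have hRHS2 : ((1 / 2 * (legendreSym p (-2) : ℚ)
      * ((legQ p (1 - x) : ℚ) * (1 + 2 * x) + (legQ p (1 + x) : ℚ) * (1 - 2 * x)) : ℚ)
        : ZMod p)
      = i2 * ((-2 : ZMod p) ^ (p / 2))
        * ((1 - X) ^ (p / 2) * (1 + 2 * X) + (1 + X) ^ (p / 2) * (1 - 2 * X)) := by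
    rw [Rat.cast_mul_of_ne_zero (den_ne (good_mul hghalf hgA))
        (den_ne (good_add (good_mul (good_int _) hg12p) (good_mul (good_int _) hg12m))),
      Rat.cast_mul_of_ne_zero (den_ne hghalf) (den_ne hgA),
      Rat.cast_add_of_ne_zero (den_ne (good_mul (good_int _) hg12p))
        (den_ne (good_mul (good_int _) hg12m)),
      Rat.cast_mul_of_ne_zero (den_ne (good_int _)) (den_ne hg12p),
      Rat.cast_mul_of_ne_zero (den_ne (good_int _)) (den_ne hg12m),
      hhalf, Rat.cast_intCast, Rat.cast_intCast, Rat.cast_intCast,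
      hleg, hlm, hlp, hc12p, hc12m]
  -- LHS casts
  have hLHS1 : ((w (p / 4) (2 * x ^ 2 - 1) : ℚ) : ZMod p)
      = (PQ (p / 4) X).1 * (PQ (p / 4) X).2 := by
    rw [(w_cast hgx2 (p / 4)).2, hC, w_PQ]
  have hLHS2 : ((w (3 * p / 4) (2 * x ^ 2 - 1) : ℚ) : ZMod p)
      = (PQ (3 * p / 4) X).1 * (PQ (3 * p / 4) X).2 := by
    rw [(w_cast hgx2 (3 * p / 4)).2, hC, w_PQ]
  have hp4 : p % 4 = 1 ∨ p % 4 = 3 := by omega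
  constructor
  · rw [hLHS1, hRHS1]
    rcases hp4 with h4 | h4
    · have hk := (key hp2 φ α a b ha hb ext (p / 4)).1 (by omega)
      rw [hXαβ, hχp, hχm] at hk
      have hs : (-1 : ZMod p) ^ (p / 2) = 1 :=
        Even.neg_one_pow (by rw [Nat.even_iff]; omega)
      rw [hs, one_mul] at hk
      rw [hδ, hs, one_mul]
      linear_combination i2 * hk - ((PQ (p / 4) X).1 * (PQ (p / 4) X).2) * h2
    · have hk := (key hp2 φ α a b ha hb ext (p / 4)).2.1 (by omega)
      rw [hXαβ, hχp, hχm] at hk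
      have hs : (-1 : ZMod p) ^ (p / 2) = -1 :=
        Odd.neg_one_pow (by rw [Nat.odd_iff]; omega)
      rw [hs] at hk
      rw [hδ, hs]
      linear_combination i2 * hk - ((PQ (p / 4) X).1 * (PQ (p / 4) X).2) * h2
  · rw [hLHS2, hRHS2]
    rcases hp4 with h4 | h4
    · have hk := (key hp2 φ α a b ha hb ext (3 * p / 4)).2.2.2 (by omega)
      rw [hXαβ, hca, hcb, hχp, hχm] at hk
      have hs : (-1 : ZMod p) ^ (p / 2) = 1 :=
        Even.neg_one_pow (by rw [Nat.even_iff]; omega)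
      rw [hs, one_mul] at hk
      rw [hδ, hs, one_mul]
      linear_combination i2 * hk - ((PQ (3 * p / 4) X).1 * (PQ (3 * p / 4) X).2) * h2
    · have hk := (key hp2 φ α a b ha hb ext (3 * p / 4)).2.2.1 (by omega)
      rw [hXαβ, hca, hcb, hχp, hχm] at hk
      have hs : (-1 : ZMod p) ^ (p / 2) = -1 :=
        Odd.neg_one_pow (by rw [Nat.odd_iff]; omega)
      rw [hs] at hk
      rw [hδ, hs]
      linear_combination i2 * hk - ((PQ (3 * p / 4) X).1 * (PQ (3 * p / 4) X).2) * h2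
end

section
/- Let α be a nonzero complex number with α³ ≠ 1 and set x = (α + α⁻¹)/2. Then for every nonnegative integer n, w_n(4x³ − 3x) = (α^{3n+2} − α^{−(3n+1)}) / (α² − α^{−1}). -/
lemma key_s12 (β : ℂ) (hβ : β ≠ 0) : ∀ n : ℕ,
    w n ((β + β⁻¹) / 2) * ((β - 1) * β ^ n) = β ^ (2 * n + 1) - 1
  | 0 => by simp [w]
  | 1 => by
    have ht : β * β⁻¹ = 1 := mul_inv_cancel₀ hβ
    simp only [w]
    linear_combination (β - 1) * ht
  | (n + 2) => by
    have ih1 := key_s12 β hβ (n + 1)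
    have ih0 := key_s12 β hβ n
    have ht : β * β⁻¹ = 1 := mul_inv_cancel₀ hβ
    simp only [w]
    linear_combination (β + β⁻¹) * β * ih1 - β ^ 2 * ih0 + (β ^ (2 * n + 3) - 1) * ht

theorem stmt12 (α : ℂ) (h0 : α ≠ 0) (h1 : α ^ 3 ≠ 1) (n : ℕ) :
    w n (4 * ((α + α⁻¹) / 2) ^ 3 - 3 * ((α + α⁻¹) / 2))
      = (α ^ (3 * (n : ℤ) + 2) - α ^ (-(3 * (n : ℤ) + 1))) / (α ^ 2 - α⁻¹) := by
  have hx : 4 * ((α + α⁻¹) / 2) ^ 3 - 3 * ((α + α⁻¹) / 2) = (α ^ 3 + (α ^ 3)⁻¹) / 2 := by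
    field_simp
    ring
  have hd : α ^ 2 - α⁻¹ ≠ 0 := by
    intro h
    apply h1
    have h2 := sub_eq_zero.mp h
    have : α ^ 2 * α = α⁻¹ * α := by rw [h2]
    rw [inv_mul_cancel₀ h0] at this
    linear_combination this
  have hk := key_s12 (α ^ 3) (pow_ne_zero 3 h0) n
  rw [hx]
  rw [show (3 * (n : ℤ) + 2) = ((3 * n + 2 : ℕ) : ℤ) by push_cast; ring, zpow_natCast,
    show (-(3 * (n : ℤ) + 1)) = -((3 * n + 1 : ℕ) : ℤ) by push_cast; ring, zpow_neg, zpow_natCast]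
  set W := w n ((α ^ 3 + (α ^ 3)⁻¹) / 2) with hW
  rw [eq_div_iff hd]
  field_simp
  linear_combination α * hk
end

section
/- Let p be a prime with p > 3 and let x ∈ D_p. Then: (i) (2x+1) · w_{⌊p/3⌋}(4x³ − 3x) ≡ (p/3)·x + ((x² − 1)/p)·(x+1) (mod p); (ii) (2x+1) · w_{⌊2p/3⌋}(4x³ − 3x) ≡ (p/3)·(1 − 2x²) + 2·((x² − 1)/p)·x·(x+1) (mod p). -/
lemma w_zero {R : Type*} [CommRing R] (x : R) : w 0 x = 1 := rfl
lemma w_one {R : Type*} [CommRing R] (x : R) : w 1 x = 1 + 2 * x := rfl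
lemma w_rec {R : Type*} [CommRing R] (n : ℕ) (x : R) :
    w (n + 2) x = 2 * x * w (n + 1) x - w n x := rfl

lemma map_w {R S : Type*} [CommRing R] [CommRing S] (f : R →+* S) (q : R) :
    ∀ n, f (w n q) = w n (f q) := by
  have key : ∀ n, f (w n q) = w n (f q) ∧ f (w (n+1) q) = w (n+1) (f q) := by
    intro n
    induction n with
    | zero =>
      refine ⟨by simp [w_zero], ?_⟩
      rw [w_one, w_one, map_add, map_mul, map_one, map_ofNat]
    | succ k ih =>
      refine ⟨ih.2, ?_⟩
      rw [w_rec, w_rec, map_sub, map_mul, map_mul, map_ofNat, ih.1, ih.2]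
  exact fun n => (key n).1

lemma w_at_one {R : Type*} [CommRing R] : ∀ n : ℕ, w n (1 : R) = 2 * n + 1 := by
  have key : ∀ n : ℕ, w n (1:R) = 2*n+1 ∧ w (n+1) (1:R) = 2*n+3 := by
    intro n
    induction n with
    | zero =>
      refine ⟨by simp [w_zero], ?_⟩
      rw [w_one]; norm_num
    | succ k ih =>
      refine ⟨by rw [ih.2]; push_cast; ring, ?_⟩
      rw [w_rec, ih.1, ih.2]; push_cast; ring
  intro n
  rw [(key n).1]

lemma w_at_neg_one {R : Type*} [CommRing R] : ∀ n : ℕ, w n (-1 : R) = (-1) ^ n := by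
  have key : ∀ n : ℕ, w n (-1:R) = (-1)^n ∧ w (n+1) (-1:R) = (-1)^(n+1) := by
    intro n
    induction n with
    | zero =>
      refine ⟨by simp [w_zero], ?_⟩
      rw [w_one]; norm_num
    | succ k ih =>
      refine ⟨ih.2, ?_⟩
      rw [w_rec, ih.1, ih.2]; ring
  exact fun n => (key n).1

/-- Core identity: if `2*g*u^3 = u^6+1` then `w n g * ((u^3-1) * u^(3n)) = u^(6n+3) - 1`. -/
lemma wL {R : Type*} [CommRing R] (u g : R) (hg : 2*g*u^3 = u^6 + 1) :
    ∀ n : ℕ, w n g * ((u^3 - 1) * u^(3*n)) = u^(6*n+3) - 1 := by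
  have key : ∀ n : ℕ, (w n g * ((u^3 - 1) * u^(3*n)) = u^(6*n+3) - 1) ∧
      (w (n+1) g * ((u^3 - 1) * u^(3*(n+1))) = u^(6*(n+1)+3) - 1) := by
    intro n
    induction n with
    | zero =>
      constructor
      · rw [w_zero]; ring
      · rw [w_one]
        linear_combination (u^3 - 1) * hg
    | succ k ih =>
      refine ⟨ih.2, ?_⟩
      rw [w_rec]
      linear_combination (w (k+1) g * (u^3-1) * u^(3*k+3)) * hg + (u^6+1) * ih.2 - u^6 * ih.1
  exact fun n => (key n).1

section Engine
variable {K : Type*} [Field K]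

lemma hg_of_hα (u α : K) (hα : 2*α*u = u^2+1) :
    2*(4*α^3-3*α)*u^3 = u^6+1 := by
  linear_combination ((2*α*u)^2 + (2*α*u)*(u^2+1) + (u^2+1)^2 - 3*u^2) * hα

lemma engine (u α T s1 s2 : K) (hu : u ≠ 0) (hα : 2*α*u = u^2+1) (h3 : u^3 ≠ 1)
    (n : ℕ) (hs1 : u^(3*n) = s1) (hs2 : u^(6*n+3) = s2)
    (hT : (2*α+1) * (s2 - 1) = T * ((u^3-1) * s1)) :
    (2*α+1) * w n (4*α^3-3*α) = T := by
  have hg := hg_of_hα u α hα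
  have hW := wL u _ hg n
  have hne : (u^3-1) * u^(3*n) ≠ 0 := mul_ne_zero (sub_ne_zero.mpr h3) (pow_ne_zero _ hu)
  apply mul_right_cancel₀ hne
  calc (2*α+1) * w n (4*α^3-3*α) * ((u^3-1) * u^(3*n))
      = (2*α+1) * (w n (4*α^3-3*α) * ((u^3-1) * u^(3*n))) := by ring
    _ = (2*α+1) * (u^(6*n+3) - 1) := by rw [hW]
    _ = (2*α+1) * (s2 - 1) := by rw [hs2]
    _ = T * ((u^3-1) * s1) := hT
    _ = T * ((u^3-1) * u^(3*n)) := by rw [hs1]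

lemma cube_ne_one (h2 : (2:K) ≠ 0) (u α : K) (hα : 2*α*u = u^2+1)
    (hγ : 4*α^3-3*α ≠ 1) : u^3 ≠ 1 := by
  intro h3
  apply hγ
  have hg := hg_of_hα u α hα
  have h6 : u^6 = 1 := by rw [show u^6 = (u^3)^2 by ring, h3, one_pow]
  rw [h3, h6] at hg
  exact mul_left_cancel₀ h2 (by linear_combination hg)

lemma posred {u : K} {e : ℕ} (hfix : u^e = 1) (E j t : ℕ) (hE : E = e*t + j) :
    u^E = u^j := by
  rw [hE, pow_add, pow_mul, hfix, one_pow, one_mul]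

lemma invred {u : K} {e : ℕ} (hfix : u^e = 1) (E k t : ℕ) (hE : E + k = e*t) :
    u^E = (u^k)⁻¹ := by
  have h : u^E * u^k = 1 := by rw [← pow_add, hE, pow_mul, hfix, one_pow]
  exact eq_inv_of_mul_eq_one_left h

lemma alpha_val (h2 : (2:K) ≠ 0) {u α : K} (hu : u ≠ 0) (hα : 2*α*u = u^2+1) :
    α = (u^2+1)/(2*u) := by
  rw [eq_div_iff (by exact mul_ne_zero h2 hu)]
  linear_combination hα

lemma main_1_1 (p n : ℕ) (hpn : p = 3*n+1) (h2 : (2:K) ≠ 0) (u α : K)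
    (hu : u ≠ 0) (hα : 2*α*u = u^2+1) (h3 : u^3 ≠ 1) (hfix : u^(p-1) = 1) :
    (2*α+1) * w n (4*α^3-3*α) = 2*α+1 ∧
    (2*α+1) * w (2*n) (4*α^3-3*α) = 2*α+1 := by
  constructor
  · refine engine u α _ 1 (u^3) hu hα h3 n ?_ ?_ (by ring)
    · exact posred hfix _ 0 1 (by omega) |>.trans (pow_zero u)
    · exact posred hfix _ 3 2 (by omega)
  · refine engine u α _ 1 (u^3) hu hα h3 (2*n) ?_ ?_ (by ring)
    · exact posred hfix _ 0 2 (by omega) |>.trans (pow_zero u)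
    · exact posred hfix _ 3 4 (by omega)

lemma main_1_neg (p n : ℕ) (hpn : p = 3*n+1) (h2 : (2:K) ≠ 0) (u α : K)
    (hu : u ≠ 0) (hα : 2*α*u = u^2+1) (h3 : u^3 ≠ 1) (hfix : u^(p+1) = 1) :
    (2*α+1) * w n (4*α^3-3*α) = -1 ∧
    (2*α+1) * w (2*n) (4*α^3-3*α) = 1 - 2*α - 4*α^2 := by
  have hαv := alpha_val h2 hu hα
  constructor
  · refine engine u α _ ((u^2)⁻¹) ((u^1)⁻¹) hu hα h3 n ?_ ?_ ?_
    · exact invred hfix _ 2 1 (by omega)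
    · exact invred hfix _ 1 2 (by omega)
    · rw [hαv]; field_simp; ring
  · refine engine u α _ ((u^4)⁻¹) ((u^5)⁻¹) hu hα h3 (2*n) ?_ ?_ ?_
    · exact invred hfix _ 4 2 (by omega)
    · exact invred hfix _ 5 4 (by omega)
    · rw [hαv]; field_simp; ring

lemma main_2_1 (p n : ℕ) (hpn : p = 3*n+2) (h2 : (2:K) ≠ 0) (u α : K)
    (hu : u ≠ 0) (hα : 2*α*u = u^2+1) (h3 : u^3 ≠ 1) (hfix : u^(p-1) = 1) :
    (2*α+1) * w n (4*α^3-3*α) = 1 ∧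
    (2*α+1) * w (2*n+1) (4*α^3-3*α) = 4*α^2+2*α-1 := by
  have hαv := alpha_val h2 hu hα
  constructor
  · refine engine u α _ ((u^1)⁻¹) (u^1) hu hα h3 n ?_ ?_ ?_
    · exact invred hfix _ 1 1 (by omega)
    · exact posred hfix _ 1 2 (by omega)
    · rw [hαv]; field_simp; ring
  · refine engine u α _ (u^1) (u^5) hu hα h3 (2*n+1) ?_ ?_ ?_
    · exact posred hfix _ 1 2 (by omega)
    · exact posred hfix _ 5 4 (by omega)
    · rw [hαv]; field_simp; ring

lemma main_2_neg (p n : ℕ) (hpn : p = 3*n+2) (h2 : (2:K) ≠ 0) (u α : K)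
    (hu : u ≠ 0) (hα : 2*α*u = u^2+1) (h3 : u^3 ≠ 1) (hfix : u^(p+1) = 1) :
    (2*α+1) * w n (4*α^3-3*α) = -(2*α+1) ∧
    (2*α+1) * w (2*n+1) (4*α^3-3*α) = -(2*α+1) := by
  constructor
  · refine engine u α _ ((u^3)⁻¹) ((u^3)⁻¹) hu hα h3 n ?_ ?_ ?_
    · exact invred hfix _ 3 1 (by omega)
    · exact invred hfix _ 3 2 (by omega)
    · field_simp; ring
  · refine engine u α _ ((u^3)⁻¹) ((u^3)⁻¹) hu hα h3 (2*n+1) ?_ ?_ ?_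
    · exact invred hfix _ 3 2 (by omega)
    · exact invred hfix _ 3 4 (by omega)
    · field_simp; ring

end Engine

section Orchestrate
variable {p : ℕ} [Fact p.Prime]

lemma transfer {K : Type} [Field K] (φ : ZMod p →+* K) (hinj : Function.Injective φ)
    (a T : ZMod p) (n : ℕ)
    (h : (2*(φ a)+1) * w n (4*(φ a)^3-3*(φ a)) = φ T) :
    (2*a+1) * w n (4*a^3-3*a) = T := by
  apply hinj
  rw [map_mul, map_w φ]
  simp only [map_add, map_mul, map_sub, map_pow, map_one, map_ofNat]
  exact h

lemma main_zmod (hp : 3 < p) (a : ZMod p) (e L : ℤ)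
    (hγ1 : 4*a^3-3*a ≠ 1)
    (hL : (p % 3 = 1 ∧ L = 1) ∨ (p % 3 = 2 ∧ L = -1))
    (hw : ∃ (K : Type) (_ : Field K) (φ : ZMod p →+* K) (u : K),
      Function.Injective φ ∧ u ≠ 0 ∧ 2*(φ a)*u = u^2+1 ∧
      ((e = 1 ∧ u^(p-1) = 1) ∨ (e = -1 ∧ u^(p+1) = 1))) :
    (2*a+1) * w (p/3) (4*a^3-3*a) = (L:ZMod p)*a + (e:ZMod p)*(a+1) ∧
    (2*a+1) * w (2*p/3) (4*a^3-3*a) =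
      (L:ZMod p)*(1-2*a^2) + 2*(e:ZMod p)*a*(a+1) := by
  obtain ⟨K, _, φ, u, hinj, hu, hα, hfix⟩ := hw
  have h2Z : (2 : ZMod p) ≠ 0 := by
    have h2n : ((2:ℕ) : ZMod p) ≠ 0 := by
      rw [Ne, ZMod.natCast_eq_zero_iff]
      intro h
      exact absurd (Nat.le_of_dvd two_pos h) (by omega)
    simpa using h2n
  have h2K : (2 : K) ≠ 0 := by
    intro h
    apply h2Z
    apply hinj
    rw [map_ofNat, map_zero]
    simpa using h
  have hγK : 4*(φ a)^3-3*(φ a) ≠ 1 := by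
    intro h
    apply hγ1
    apply hinj
    rw [map_sub, map_mul, map_mul, map_pow, map_ofNat, map_ofNat, map_one]
    simpa using h
  have h3 : u^3 ≠ 1 := cube_ne_one h2K u (φ a) hα hγK
  set α := φ a with hαdef
  rcases hL with ⟨hp3, hLv⟩ | ⟨hp3, hLv⟩
  · -- p = 3n+1
    set n := p / 3 with hn
    have hpn : p = 3*n+1 := by omega
    have hidx2 : 2*p/3 = 2*n := by omega
    rcases hfix with ⟨hev, hfix⟩ | ⟨hev, hfix⟩
    · have hK := main_1_1 p n hpn h2K u α hu hα h3 hfix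
      subst hLv hev
      constructor
      · refine transfer φ hinj a _ _ ?_
        simp only [map_add, map_mul, map_sub, map_pow, map_one, map_ofNat, map_intCast,
          Int.cast_one, Int.cast_neg, map_neg]
        push_cast
        linear_combination hK.1
      · rw [hidx2]
        refine transfer φ hinj a _ _ ?_
        simp only [map_add, map_mul, map_sub, map_pow, map_one, map_ofNat, map_intCast,
          Int.cast_one, Int.cast_neg, map_neg]
        push_cast
        linear_combination hK.2
    · have hK := main_1_neg p n hpn h2K u α hu hα h3 hfix
      subst hLv hev
      constructor
      · refine transfer φ hinj a _ _ ?_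
        simp only [map_add, map_mul, map_sub, map_pow, map_one, map_ofNat, map_intCast,
          Int.cast_one, Int.cast_neg, map_neg]
        push_cast
        linear_combination hK.1
      · rw [hidx2]
        refine transfer φ hinj a _ _ ?_
        simp only [map_add, map_mul, map_sub, map_pow, map_one, map_ofNat, map_intCast,
          Int.cast_one, Int.cast_neg, map_neg]
        push_cast
        linear_combination hK.2
  · -- p = 3n+2
    set n := p / 3 with hn
    have hpn : p = 3*n+2 := by omega
    have hidx2 : 2*p/3 = 2*n+1 := by omega
    rcases hfix with ⟨hev, hfix⟩ | ⟨hev, hfix⟩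
    · have hK := main_2_1 p n hpn h2K u α hu hα h3 hfix
      subst hLv hev
      constructor
      · refine transfer φ hinj a _ _ ?_
        simp only [map_add, map_mul, map_sub, map_pow, map_one, map_ofNat, map_intCast,
          Int.cast_one, Int.cast_neg, map_neg]
        push_cast
        linear_combination hK.1
      · rw [hidx2]
        refine transfer φ hinj a _ _ ?_
        simp only [map_add, map_mul, map_sub, map_pow, map_one, map_ofNat, map_intCast,
          Int.cast_one, Int.cast_neg, map_neg]
        push_cast
        linear_combination hK.2
    · have hK := main_2_neg p n hpn h2K u α hu hα h3 hfix
      subst hLv hev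
      constructor
      · refine transfer φ hinj a _ _ ?_
        simp only [map_add, map_mul, map_sub, map_pow, map_one, map_ofNat, map_intCast,
          Int.cast_one, Int.cast_neg, map_neg]
        push_cast
        linear_combination hK.1
      · rw [hidx2]
        refine transfer φ hinj a _ _ ?_
        simp only [map_add, map_mul, map_sub, map_pow, map_one, map_ofNat, map_intCast,
          Int.cast_one, Int.cast_neg, map_neg]
        push_cast
        linear_combination hK.2

end Orchestrate

section Witness
variable {p : ℕ} [Fact p.Prime]
open Polynomial

lemma witness_sq (a : ZMod p) (hne : a^2-1 ≠ 0) (hsq : IsSquare (a^2-1)) :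
    ∃ (K : Type) (_ : Field K) (φ : ZMod p →+* K) (u : K),
      Function.Injective φ ∧ u ≠ 0 ∧ 2*(φ a)*u = u^2+1 ∧
      (((1:ℤ) = 1 ∧ u^(p-1) = 1) ∨ ((1:ℤ) = -1 ∧ u^(p+1) = 1)) := by
  obtain ⟨r, hr⟩ := hsq
  refine ⟨ZMod p, inferInstance, RingHom.id _, a + r, Function.injective_id, ?_, ?_, ?_⟩
  · intro h
    exact one_ne_zero (α := ZMod p) (by linear_combination (a - r)*h - hr)
  · simp only [RingHom.id_apply]
    linear_combination hr
  · refine Or.inl ⟨rfl, ZMod.pow_card_sub_one_eq_one ?_⟩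
    intro h
    exact one_ne_zero (α := ZMod p) (by linear_combination (a - r)*h - hr)

lemma witness_ns (hp : 3 < p) (a : ZMod p) (hns : ¬IsSquare (a^2-1)) :
    ∃ (K : Type) (_ : Field K) (φ : ZMod p →+* K) (u : K),
      Function.Injective φ ∧ u ≠ 0 ∧ 2*(φ a)*u = u^2+1 ∧
      (((-1:ℤ) = 1 ∧ u^(p-1) = 1) ∨ ((-1:ℤ) = -1 ∧ u^(p+1) = 1)) := by
  have pp : p.Prime := Fact.out
  have hc0 : a^2 - 1 ≠ 0 := fun h => hns (h ▸ IsSquare.zero)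
  have irr : Irreducible (X^2 - C (a^2-1) : (ZMod p)[X]) := by
    refine X_pow_sub_C_irreducible_of_prime Nat.prime_two (fun b hb => ?_)
    exact hns ⟨b, by rw [← hb]; ring⟩
  haveI : Fact (Irreducible (X^2 - C (a^2-1) : (ZMod p)[X])) := ⟨irr⟩
  set K := AdjoinRoot (X^2 - C (a^2-1) : (ZMod p)[X]) with hK
  let φ : ZMod p →+* K := AdjoinRoot.of _
  have hinj : Function.Injective φ := φ.injective
  haveI : CharP K p := charP_of_injective_ringHom hinj p
  set b : K := AdjoinRoot.root _ with hbdef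
  have hb : b^2 = φ (a^2-1) := by
    have h0 := AdjoinRoot.eval₂_root (X^2 - C (a^2-1) : (ZMod p)[X])
    simp only [eval₂_sub, eval₂_pow, eval₂_X, eval₂_C, sub_eq_zero] at h0
    exact h0
  have hc : φ (a^2-1) = (φ a)^2 - 1 := by rw [map_sub, map_pow, map_one]
  have hu : φ a + b ≠ 0 := by
    intro h0
    have hba : b = -(φ a) := by linear_combination h0
    rw [hba] at hb
    have : φ (a^2) = φ (a^2-1) := by rw [map_pow, ← hb]; ring
    have h2 := hinj this
    have : (1 : ZMod p) = 0 := by linear_combination h2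
    exact one_ne_zero this
  have hα : 2*(φ a)*(φ a+b) = (φ a+b)^2+1 := by linear_combination -hb - hc
  -- Frobenius
  have hodd : p = 2*(p/2)+1 := by
    have := pp.two_le
    rcases pp.eq_two_or_odd' with h2 | hodd
    · omega
    · obtain ⟨k, hk⟩ := hodd; omega
  have hpow : (a^2-1)^(p/2) = -1 :=
    ((ZMod.pow_div_two_eq_neg_one_or_one p hc0).resolve_left
      (fun h => hns ((ZMod.euler_criterion p hc0).mpr h)))
  have hbp : b^p = -b := by
    rw [show b^p = (b^2)^(p/2) * b by rw [← pow_mul, ← pow_succ]; rw [← hodd]]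
    rw [hb, ← map_pow, hpow]
    simp
    ring
  have hup : (φ a+b)^p = φ a - b := by
    rw [add_pow_char, hbp, ← map_pow, ZMod.pow_card]
    ring
  have hfix : (φ a+b)^(p+1) = 1 := by
    rw [pow_succ, hup]
    linear_combination -hb - hc
  exact ⟨K, inferInstance, φ, φ a + b, hinj, hu, hα, Or.inr ⟨rfl, hfix⟩⟩

end Witness

section CastLayer
variable {p : ℕ} [Fact p.Prime]

lemma gden_mul {q r : ℚ} (hq : ((q.den:ℕ) : ZMod p) ≠ 0) (hr : ((r.den:ℕ) : ZMod p) ≠ 0) :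
    (((q*r).den:ℕ) : ZMod p) ≠ 0 := by
  intro h
  obtain ⟨k, hk⟩ := Rat.mul_den_dvd q r
  have h0 : ((q.den * r.den : ℕ) : ZMod p) = 0 := by
    rw [hk, Nat.cast_mul, h, zero_mul]
  rw [Nat.cast_mul] at h0
  exact mul_ne_zero hq hr h0

lemma gden_add {q r : ℚ} (hq : ((q.den:ℕ) : ZMod p) ≠ 0) (hr : ((r.den:ℕ) : ZMod p) ≠ 0) :
    (((q+r).den:ℕ) : ZMod p) ≠ 0 := by
  intro h
  obtain ⟨k, hk⟩ := Rat.add_den_dvd q r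
  have h0 : ((q.den * r.den : ℕ) : ZMod p) = 0 := by
    rw [hk, Nat.cast_mul, h, zero_mul]
  rw [Nat.cast_mul] at h0
  exact mul_ne_zero hq hr h0

lemma gden_sub {q r : ℚ} (hq : ((q.den:ℕ) : ZMod p) ≠ 0) (hr : ((r.den:ℕ) : ZMod p) ≠ 0) :
    (((q-r).den:ℕ) : ZMod p) ≠ 0 := by
  rw [sub_eq_add_neg]
  exact gden_add hq (by rwa [Rat.den_neg_eq_den])

lemma gden_pow {q : ℚ} (hq : ((q.den:ℕ) : ZMod p) ≠ 0) (k : ℕ) :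
    (((q^k).den:ℕ) : ZMod p) ≠ 0 := by
  rw [Rat.den_pow, Nat.cast_pow]
  exact pow_ne_zero _ hq

lemma gden_ofNat (hp : 3 < p) (m : ℕ) [m.AtLeastTwo] :
    (((OfNat.ofNat m : ℚ).den : ℕ) : ZMod p) ≠ 0 := by
  rw [Rat.den_ofNat, Nat.cast_one]
  exact one_ne_zero

lemma gden_one (hp : 3 < p) : (((1:ℚ).den : ℕ) : ZMod p) ≠ 0 := by
  norm_num

lemma gden_int (hp : 3 < p) (z : ℤ) : ((((z:ℚ)).den : ℕ) : ZMod p) ≠ 0 := by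
  rw [Rat.den_intCast, Nat.cast_one]
  exact one_ne_zero

lemma cast_pow_of {q : ℚ} (hq : ((q.den:ℕ) : ZMod p) ≠ 0) (k : ℕ) :
    ((q^k : ℚ) : ZMod p) = (q : ZMod p)^k := by
  induction k with
  | zero => simp
  | succ m ih =>
    rw [pow_succ, Rat.cast_mul_of_ne_zero (gden_pow hq m) hq, ih, pow_succ]

lemma w_cast_s13 (hp : 3 < p) (q : ℚ) (hq : ((q.den:ℕ) : ZMod p) ≠ 0) :
    ∀ n, (((w n q).den : ℕ) : ZMod p) ≠ 0 ∧ ((w n q : ℚ) : ZMod p) = w n (q : ZMod p) := by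
  have g2 := gden_ofNat (p := p) hp 2
  have g1 := gden_one (p := p) hp
  have key : ∀ n, ((((w n q).den : ℕ) : ZMod p) ≠ 0 ∧ ((w n q : ℚ) : ZMod p) = w n (q : ZMod p))
      ∧ ((((w (n+1) q).den : ℕ) : ZMod p) ≠ 0 ∧
        ((w (n+1) q : ℚ) : ZMod p) = w (n+1) (q : ZMod p)) := by
    intro n
    induction n with
    | zero =>
      refine ⟨⟨by rw [w_zero]; exact g1, by rw [w_zero, w_zero, Rat.cast_one]⟩, ?_, ?_⟩
      · rw [w_one]; exact gden_add g1 (gden_mul g2 hq)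
      · rw [w_one, w_one, Rat.cast_add_of_ne_zero g1 (gden_mul g2 hq),
          Rat.cast_mul_of_ne_zero g2 hq, Rat.cast_one, Rat.cast_ofNat]
    | succ k ih =>
      refine ⟨ih.2, ?_, ?_⟩
      · rw [w_rec]
        exact gden_sub (gden_mul (gden_mul g2 hq) ih.2.1) ih.1.1
      · rw [w_rec, w_rec, Rat.cast_sub_of_ne_zero (gden_mul (gden_mul g2 hq) ih.2.1) ih.1.1,
          Rat.cast_mul_of_ne_zero (gden_mul g2 hq) ih.2.1,
          Rat.cast_mul_of_ne_zero g2 hq, Rat.cast_ofNat, ih.1.2, ih.2.2]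
  exact fun n => (key n).1

end CastLayer


section LegendreLayer
variable {p : ℕ} [Fact p.Prime]

lemma legQ_key (c : ℚ) (hd : ((c.den:ℕ) : ZMod p) ≠ 0) :
    ((c.num * (c.den:ℤ) : ℤ) : ZMod p) = (c : ZMod p) * ((c.den : ℕ) : ZMod p)^2 := by
  rw [Rat.cast_def]
  push_cast
  field_simp

lemma legQ_zero (c : ℚ) (hd : ((c.den:ℕ) : ZMod p) ≠ 0) (h0 : (c : ZMod p) = 0) :
    legQ p c = 0 := by
  rw [legQ, legendreSym.eq_zero_iff]
  rw [legQ_key c hd, h0, zero_mul]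

lemma legQ_one (c : ℚ) (hd : ((c.den:ℕ) : ZMod p) ≠ 0) (h0 : (c : ZMod p) ≠ 0)
    (hsq : IsSquare ((c : ZMod p))) : legQ p c = 1 := by
  rw [legQ, legendreSym.eq_one_iff]
  · rw [legQ_key c hd]
    exact hsq.mul ⟨((c.den : ℕ) : ZMod p), by ring⟩
  · rw [legQ_key c hd]
    exact mul_ne_zero h0 (pow_ne_zero _ hd)

lemma legQ_neg (c : ℚ) (hd : ((c.den:ℕ) : ZMod p) ≠ 0)
    (hns : ¬ IsSquare ((c : ZMod p))) : legQ p c = -1 := by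
  rw [legQ, legendreSym.eq_neg_one_iff]
  rw [legQ_key c hd]
  rintro ⟨t, ht⟩
  refine hns ⟨t / ((c.den : ℕ) : ZMod p), ?_⟩
  field_simp
  linear_combination ht

lemma L3_val (hp : 3 < p) :
    (p % 3 = 1 ∧ legendreSym 3 p = 1) ∨ (p % 3 = 2 ∧ legendreSym 3 p = -1) := by
  have pp : p.Prime := Fact.out
  have h3 : ¬ (3 ∣ p) := by
    intro h
    rcases (Nat.Prime.eq_one_or_self_of_dvd pp 3 h) with h' | h' <;> omega
  have hmod := legendreSym.mod 3 (p : ℤ)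
  have hcases : p % 3 = 1 ∨ p % 3 = 2 := by omega
  rcases hcases with h | h
  · refine Or.inl ⟨h, ?_⟩
    have h1 : ((p : ℤ) % ((3:ℕ):ℤ)) = 1 := by push_cast; omega
    rw [hmod, h1, legendreSym.at_one]
  · refine Or.inr ⟨h, ?_⟩
    have h1 : ((p : ℤ) % ((3:ℕ):ℤ)) = 2 := by push_cast; omega
    rw [hmod, h1]
    rw [legendreSym.eq_neg_one_iff]
    decide

lemma leg_neg_three (hp : 3 < p) : legendreSym p (-3) = legendreSym 3 p := by
  have pp : p.Prime := Fact.out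
  have hp2 : p ≠ 2 := by omega
  have hodd : p % 2 = 1 := Nat.Prime.eq_two_or_odd pp |>.resolve_left hp2
  have hqr := legendreSym.quadratic_reciprocity' (p := p) (q := 3) hp2 (by norm_num)
  have h32 : (3:ℕ)/2 = 1 := by norm_num
  rw [h32, mul_one] at hqr
  have hneg1 : legendreSym p (-1) = (-1)^(p/2) := by
    rw [legendreSym.at_neg_one hp2, ZMod.χ₄_eq_neg_one_pow hodd]
  have hmul : legendreSym p (-3) = legendreSym p (-1) * legendreSym p 3 := by
    rw [show (-3 : ℤ) = -1 * 3 by norm_num, legendreSym.mul]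
  rw [hmul, hneg1, hqr]
  norm_num

end LegendreLayer

section Core
variable {p : ℕ} [Fact p.Prime]

lemma two_ne_zero_zmod (hp : 3 < p) : (2 : ZMod p) ≠ 0 := by
  have h2n : ((2:ℕ) : ZMod p) ≠ 0 := by
    rw [Ne, ZMod.natCast_eq_zero_iff]
    intro h
    exact absurd (Nat.le_of_dvd two_pos h) (by omega)
  simpa using h2n

lemma core (hp : 3 < p) (x : ℚ) (hx : ¬ p ∣ x.den) :
    ((2*((x:ℚ):ZMod p)+1) * w (p/3) (4*((x:ℚ):ZMod p)^3-3*((x:ℚ):ZMod p))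
      = ((legendreSym 3 p : ℤ):ZMod p)*((x:ℚ):ZMod p)
        + ((legQ p (x^2-1) : ℤ):ZMod p)*(((x:ℚ):ZMod p)+1)) ∧
    ((2*((x:ℚ):ZMod p)+1) * w (2*p/3) (4*((x:ℚ):ZMod p)^3-3*((x:ℚ):ZMod p))
      = ((legendreSym 3 p : ℤ):ZMod p)*(1-2*((x:ℚ):ZMod p)^2)
        + 2*((legQ p (x^2-1) : ℤ):ZMod p)*((x:ℚ):ZMod p)*(((x:ℚ):ZMod p)+1)) := by
  have pp : p.Prime := Fact.out
  set a : ZMod p := ((x:ℚ):ZMod p) with ha_def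
  have gx : ((x.den:ℕ) : ZMod p) ≠ 0 := by
    rwa [Ne, ZMod.natCast_eq_zero_iff]
  have g1 := gden_one (p := p) hp
  have hc2den := gden_sub (p := p) (gden_pow gx 2) g1
  have hc2 : ((x^2-1 : ℚ) : ZMod p) = a^2 - 1 := by
    rw [Rat.cast_sub_of_ne_zero (gden_pow gx 2) g1, cast_pow_of gx, Rat.cast_one]
  have hodd : p % 2 = 1 := Nat.Prime.eq_two_or_odd pp |>.resolve_left (by omega)
  have h3p : ¬ (3 ∣ p) := by
    intro h
    rcases (Nat.Prime.eq_one_or_self_of_dvd pp 3 h) with h' | h' <;> omega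
  have hL3 := L3_val (p := p) hp
  have h2Z := two_ne_zero_zmod (p := p) hp
  by_cases h1 : a^2 - 1 = 0
  · -- degenerate: a = ±1
    have hLq : legQ p (x^2-1) = 0 := legQ_zero _ hc2den (by rw [hc2]; exact h1)
    rcases mul_eq_zero.mp (show (a-1)*(a+1) = 0 by linear_combination h1) with h | h
    · -- a = 1
      have ha : a = 1 := by linear_combination h
      rw [ha, hLq]
      have harg : (4*(1:ZMod p)^3-3*1 : ZMod p) = 1 := by norm_num
      rw [harg, w_at_one, w_at_one]
      rcases hL3 with ⟨hp3, hv⟩ | ⟨hp3, hv⟩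
      · have e1 : (3*(p/3)+1 : ℕ) = p := by omega
        have e2 : (3*(2*p/3)+2 : ℕ) = 2*p := by omega
        have hz1 : 3*((p/3 : ℕ) : ZMod p) + 1 = 0 := by
          have := congrArg (Nat.cast : ℕ → ZMod p) e1
          push_cast at this
          rwa [ZMod.natCast_self] at this
        have hz2 : 3*((2*p/3 : ℕ) : ZMod p) + 2 = 0 := by
          have := congrArg (Nat.cast : ℕ → ZMod p) e2
          push_cast at this
          rw [ZMod.natCast_self] at this
          linear_combination this
        rw [hv]
        push_cast
        constructor
        · linear_combination 2*hz1
        · linear_combination 2*hz2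
      · have e1 : (3*(p/3)+2 : ℕ) = p := by omega
        have e2 : (3*(2*p/3)+1 : ℕ) = 2*p := by omega
        have hz1 : 3*((p/3 : ℕ) : ZMod p) + 2 = 0 := by
          have := congrArg (Nat.cast : ℕ → ZMod p) e1
          push_cast at this
          rwa [ZMod.natCast_self] at this
        have hz2 : 3*((2*p/3 : ℕ) : ZMod p) + 1 = 0 := by
          have := congrArg (Nat.cast : ℕ → ZMod p) e2
          push_cast at this
          rw [ZMod.natCast_self] at this
          linear_combination this
        rw [hv]
        push_cast
        constructor
        · linear_combination 2*hz1
        · linear_combination 2*hz2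
    · -- a = -1
      have ha : a = -1 := by linear_combination h
      rw [ha, hLq]
      have harg : (4*(-1:ZMod p)^3-3*(-1) : ZMod p) = -1 := by norm_num
      rw [harg, w_at_neg_one, w_at_neg_one]
      rcases hL3 with ⟨hp3, hv⟩ | ⟨hp3, hv⟩
      · obtain ⟨m1, hm1⟩ : ∃ m, p/3 = 2*m := ⟨p/3/2, by omega⟩
        obtain ⟨m2, hm2⟩ : ∃ m, 2*p/3 = 2*m := ⟨2*p/3/2, by omega⟩
        rw [hv, hm1, hm2, pow_mul, pow_mul]
        norm_num
      · obtain ⟨m1, hm1⟩ : ∃ m, p/3 = 2*m+1 := ⟨p/3/2, by omega⟩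
        obtain ⟨m2, hm2⟩ : ∃ m, 2*p/3 = 2*m+1 := ⟨2*p/3/2, by omega⟩
        rw [hv, hm1, hm2, pow_succ, pow_succ, pow_mul, pow_mul]
        norm_num
  · by_cases h2 : 2*a+1 = 0
    · -- a = -1/2 case
      have hne3 : ((-3:ℤ) : ZMod p) ≠ 0 := by
        rw [Ne, ZMod.intCast_zmod_eq_zero_iff_dvd]
        intro hdvd
        have hd3 : (p:ℤ) ∣ 3 := (dvd_neg (α := ℤ)).mp hdvd
        have : p ∣ 3 := by exact_mod_cast hd3
        exact absurd (Nat.le_of_dvd (by norm_num) this) (by omega)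
      have heq : ((-3:ℤ) : ZMod p) = (a^2-1)*2^2 := by
        push_cast
        linear_combination (1-2*a)*h2
      have hLqL3 : legQ p (x^2-1) = legendreSym 3 p := by
        by_cases hsq3 : IsSquare ((-3:ℤ) : ZMod p)
        · obtain ⟨t, ht⟩ := hsq3
          have hsqc : IsSquare (a^2-1) := by
            refine ⟨t/2, ?_⟩
            field_simp
            linear_combination ht - heq
          rw [legQ_one _ hc2den (by rw [hc2]; exact h1) (by rw [hc2]; exact hsqc),
            ← leg_neg_three hp, (legendreSym.eq_one_iff p hne3).mpr ⟨t, ht⟩]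
        · have hnsc : ¬ IsSquare (a^2-1) := by
            rintro ⟨t, ht⟩
            exact hsq3 ⟨2*t, by rw [heq, ht]; ring⟩
          rw [legQ_neg _ hc2den (by rw [hc2]; exact hnsc),
            ← leg_neg_three hp, (legendreSym.eq_neg_one_iff p).mpr hsq3]
      rw [hLqL3]
      rcases hL3 with ⟨hp3, hv⟩ | ⟨hp3, hv⟩ <;> rw [hv] <;> push_cast <;> constructor
      · linear_combination (w (p/3) (4*a^3-3*a) - 1) * h2
      · linear_combination (w (2*p/3) (4*a^3-3*a) - 1) * h2
      · linear_combination (w (p/3) (4*a^3-3*a) + 1) * h2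
      · linear_combination (w (2*p/3) (4*a^3-3*a) + 1) * h2
    · -- main case
      have hγ1 : 4*a^3-3*a ≠ 1 := by
        intro hfac
        rcases mul_eq_zero.mp (show (a-1)*(2*a+1)^2 = 0 by linear_combination hfac) with h | h
        · exact h1 (by linear_combination (a+1)*h)
        · exact h2 (pow_eq_zero_iff (n := 2) (by norm_num) |>.mp h)
      by_cases hsq : IsSquare (a^2-1)
      · have hLq : legQ p (x^2-1) = 1 :=
          legQ_one _ hc2den (by rw [hc2]; exact h1) (by rw [hc2]; exact hsq)
        obtain ⟨K, fK, φ, u, hinj, hu, hα, hfd⟩ := witness_sq a h1 hsq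
        refine main_zmod hp a _ _ hγ1 hL3 ⟨K, fK, φ, u, hinj, hu, hα, ?_⟩
        rcases hfd with ⟨_, hfix⟩ | ⟨habs, _⟩
        · exact Or.inl ⟨hLq, hfix⟩
        · exact absurd habs (by norm_num)
      · have hLq : legQ p (x^2-1) = -1 :=
          legQ_neg _ hc2den (by rw [hc2]; exact hsq)
        obtain ⟨K, fK, φ, u, hinj, hu, hα, hfd⟩ := witness_ns hp a hsq
        refine main_zmod hp a _ _ hγ1 hL3 ⟨K, fK, φ, u, hinj, hu, hα, ?_⟩
        rcases hfd with ⟨habs, _⟩ | ⟨_, hfix⟩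
        · exact absurd habs (by norm_num)
        · exact Or.inr ⟨hLq, hfix⟩

end Core


theorem stmt13 (p : ℕ) [Fact p.Prime] (hp : 3 < p) (x : ℚ) (hx : ¬ p ∣ x.den) :
    ((((2 * x + 1) * w (p / 3) (4 * x ^ 3 - 3 * x) : ℚ) : ZMod p)
      = (((legendreSym 3 p : ℚ) * x + (legQ p (x ^ 2 - 1) : ℚ) * (x + 1) : ℚ) : ZMod p))
    ∧
    ((((2 * x + 1) * w (2 * p / 3) (4 * x ^ 3 - 3 * x) : ℚ) : ZMod p)
      = (((legendreSym 3 p : ℚ) * (1 - 2 * x ^ 2)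
          + 2 * (legQ p (x ^ 2 - 1) : ℚ) * x * (x + 1) : ℚ) : ZMod p)) := by
  have gx : ((x.den:ℕ) : ZMod p) ≠ 0 := by
    rwa [Ne, ZMod.natCast_eq_zero_iff]
  have g1 := gden_one (p := p) hp
  have g2 := gden_ofNat (p := p) hp 2
  have g3 := gden_ofNat (p := p) hp 3
  have g4 := gden_ofNat (p := p) hp 4
  have gc' := gden_sub (gden_mul g4 (gden_pow gx 3)) (gden_mul g3 gx)
  have hc'cast : ((4*x^3-3*x : ℚ) : ZMod p) = 4*((x:ℚ):ZMod p)^3 - 3*((x:ℚ):ZMod p) := by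
    rw [Rat.cast_sub_of_ne_zero (gden_mul g4 (gden_pow gx 3)) (gden_mul g3 gx),
        Rat.cast_mul_of_ne_zero g4 (gden_pow gx 3), Rat.cast_mul_of_ne_zero g3 gx,
        cast_pow_of gx]
    push_cast
    ring
  have castL : ∀ n, (((2*x+1) * w n (4*x^3-3*x) : ℚ) : ZMod p)
      = (2*((x:ℚ):ZMod p)+1) * w n (4*((x:ℚ):ZMod p)^3-3*((x:ℚ):ZMod p)) := by
    intro n
    have hw := w_cast_s13 hp _ gc' n
    rw [Rat.cast_mul_of_ne_zero (gden_add (gden_mul g2 gx) g1) hw.1,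
        Rat.cast_add_of_ne_zero (gden_mul g2 gx) g1,
        Rat.cast_mul_of_ne_zero g2 gx, hw.2, hc'cast]
    push_cast
    ring
  have castR1 : (((legendreSym 3 p : ℚ) * x + (legQ p (x^2-1) : ℚ) * (x+1) : ℚ) : ZMod p)
      = ((legendreSym 3 p : ℤ) : ZMod p)*((x:ℚ):ZMod p)
        + ((legQ p (x^2-1) : ℤ) : ZMod p)*(((x:ℚ):ZMod p)+1) := by
    rw [Rat.cast_add_of_ne_zero (gden_mul (gden_int hp _) gx)
          (gden_mul (gden_int hp _) (gden_add gx g1)),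
        Rat.cast_mul_of_ne_zero (gden_int hp _) gx,
        Rat.cast_mul_of_ne_zero (gden_int hp _) (gden_add gx g1),
        Rat.cast_add_of_ne_zero gx g1]
    push_cast
    ring
  have castR2 : (((legendreSym 3 p : ℚ) * (1 - 2*x^2)
        + 2 * (legQ p (x^2-1) : ℚ) * x * (x+1) : ℚ) : ZMod p)
      = ((legendreSym 3 p : ℤ) : ZMod p)*(1-2*((x:ℚ):ZMod p)^2)
        + 2*((legQ p (x^2-1) : ℤ) : ZMod p)*((x:ℚ):ZMod p)*(((x:ℚ):ZMod p)+1) := by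
    rw [Rat.cast_add_of_ne_zero
          (gden_mul (gden_int hp _) (gden_sub g1 (gden_mul g2 (gden_pow gx 2))))
          (gden_mul (gden_mul (gden_mul g2 (gden_int hp _)) gx) (gden_add gx g1)),
        Rat.cast_mul_of_ne_zero (gden_int hp _) (gden_sub g1 (gden_mul g2 (gden_pow gx 2))),
        Rat.cast_sub_of_ne_zero g1 (gden_mul g2 (gden_pow gx 2)),
        Rat.cast_mul_of_ne_zero g2 (gden_pow gx 2),
        cast_pow_of gx,
        Rat.cast_mul_of_ne_zero (gden_mul (gden_mul g2 (gden_int hp _)) gx) (gden_add gx g1),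
        Rat.cast_mul_of_ne_zero (gden_mul g2 (gden_int hp _)) gx,
        Rat.cast_mul_of_ne_zero g2 (gden_int hp _),
        Rat.cast_add_of_ne_zero gx g1]
    push_cast
    ring
  rw [castL _, castL _, castR1, castR2]
  exact core hp x hx
end
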